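/- arXiv:1506.06400 — 9 statements merged into one kernel-verified Lean document; each statement's English description precedes it below -/
import Mathlib

section
/- For every ε > 0 there exist δ₀ > 0 and C > 0, depending only on ε, such that for all 0 < δ ≤ δ₀ the following holds. Let a : [1,∞) → ℝ and h, γ : [1,∞) → Sym₂ be differentiable with γ(λ) invertible for all λ, let α : [1,∞) → Sym₂ be continuous, and suppose that for all λ ≥ 1: a'(λ) = −λ⁻²·( a(λ)² + tr((γ(λ)⁻¹ h(λ))²) ); h'(λ) = −2 λ⁻² h(λ) γ(λ)⁻¹ h(λ) − λ² α(λ); γ'(λ) = λ⁻² a(λ) γ(λ) + 2 λ⁻² h(λ); together with ‖λ² α(λ)‖ ≤ δ λ^(−1−ε) for all λ ≥ 1, |a(1)| ≤ δ, ‖h(1)‖ ≤ δ, and ‖γ(1) − I‖ ≤ 1/4. Then for all λ ≥ 1 one has |a(λ)| ≤ C δ, ‖h(λ)‖ ≤ C δ, and ‖γ(λ) − γ(1)‖ ≤ C δ; moreover there exist a_∞ ∈ ℝ and h_∞, γ_∞ ∈ Sym₂ such that a(λ) → a_∞, h(λ) → h_∞, and γ(λ) → γ_∞ as λ → ∞,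 and γ_∞ is positive definite. -/
/-!
Bundle the unknowns as `F = (a, h, γ - γ(1))` in `ℝ × Sym₂ × Sym₂` with the sup norm. While
`‖F‖ ≤ 1/4`, `γ` stays within `1/2` of the identity, so `‖γ⁻¹‖ ≤ 2` and the quadratic right-hand
sides give `‖F'‖ ≤ 5 λ⁻² ‖F‖ + δ λ^(-1-ε)`. The barrier
`δ (1 + ε⁻¹) exp (5 (1 - λ⁻¹) + 1 - λ^(-ε))` grows strictly faster than this allows `‖F‖` to grow
wherever the two meet, so `‖F‖` never reaches it; this gives `‖F‖ ≤ C δ` with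
`C = (1 + ε⁻¹) e⁶`, which closes the bootstrap once `C δ ≤ 1/4`. Then `‖F'‖` is integrable on
`[1, ∞)`, so `F` converges; symmetry is a closed condition, and `γ_∞` lies within `1/2` of the
identity, hence is positive definite.
-/

open scoped Matrix.Norms.L2Operator RealInnerProductSpace
open Filter Set Topology MeasureTheory Real Matrix

namespace Matrix

lemma isClosed_setOf_isSymm {n α : Type*} [TopologicalSpace α] [T2Space α] :
    IsClosed {M : Matrix n n α | M.IsSymm} :=
  isClosed_eq continuous_id.matrix_transpose continuous_id

variable {n : Type*} [Fintype n] [DecidableEq n]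

lemma l2_opNorm_one_le : ‖(1 : Matrix n n ℝ)‖ ≤ 1 := by
  rw [cstar_norm_def, map_one]
  exact ContinuousLinearMap.norm_id_le

lemma abs_dotProduct_mulVec_le_l2_opNorm_mul (M : Matrix n n ℝ) (x : n → ℝ) :
    |x ⬝ᵥ M *ᵥ x| ≤ ‖M‖ * (x ⬝ᵥ x) := by
  set y : EuclideanSpace ℝ n := WithLp.toLp 2 x
  have hMy : x ⬝ᵥ M *ᵥ x = ⟪y, (EuclideanSpace.equiv n ℝ).symm (M *ᵥ x)⟫ := by
    simp [y, EuclideanSpace.inner_eq_star_dotProduct, dotProduct_comm]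
  have hyy : x ⬝ᵥ x = ‖y‖ ^ 2 := by
    rw [← real_inner_self_eq_norm_sq, EuclideanSpace.inner_eq_star_dotProduct]
    simp [y]
  calc |x ⬝ᵥ M *ᵥ x| ≤ ‖y‖ * ‖(EuclideanSpace.equiv n ℝ).symm (M *ᵥ x)‖ :=
        hMy ▸ abs_real_inner_le_norm _ _
    _ ≤ ‖y‖ * (‖M‖ * ‖y‖) := by gcongr; exact M.l2_opNorm_mulVec y
    _ = ‖M‖ * (x ⬝ᵥ x) := by rw [hyy]; ring

lemma abs_diag_le_l2_opNorm (M : Matrix n n ℝ) (i : n) : |M i i| ≤ ‖M‖ := by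
  simpa using M.abs_dotProduct_mulVec_le_l2_opNorm_mul (Pi.single i 1)

lemma abs_trace_le_card_mul_l2_opNorm (M : Matrix n n ℝ) :
    |M.trace| ≤ Fintype.card n * ‖M‖ := by
  calc |M.trace| ≤ ∑ i, |M i i| := Finset.abs_sum_le_sum_abs _ _
    _ ≤ ∑ _i : n, ‖M‖ := Finset.sum_le_sum fun i _ => M.abs_diag_le_l2_opNorm i
    _ = Fintype.card n * ‖M‖ := by simp

lemma posDef_of_l2_opNorm_sub_one_lt {M : Matrix n n ℝ} (hM : M.IsSymm) (h : ‖M - 1‖ < 1) :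
    M.PosDef := by
  refine .of_dotProduct_mulVec_pos (by simpa [IsHermitian] using hM.eq) fun x hx => ?_
  have hxx : 0 < x ⬝ᵥ x := by simpa using dotProduct_star_self_pos_iff.mpr hx
  have hsplit : x ⬝ᵥ M *ᵥ x = x ⬝ᵥ x + x ⬝ᵥ (M - 1) *ᵥ x := by
    rw [sub_mulVec, dotProduct_sub, one_mulVec]; ring
  have := neg_le_of_abs_le ((M - 1).abs_dotProduct_mulVec_le_l2_opNorm_mul x)
  rw [star_trivial, hsplit]
  nlinarith

lemma l2_opNorm_nonsing_inv_le {A : Matrix n n ℝ} (hA : IsUnit A) (h : ‖1 - A‖ < 1) :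
    ‖A⁻¹‖ ≤ (1 - ‖1 - A‖)⁻¹ := by
  have hAinv : A⁻¹ = 1 + A⁻¹ * (1 - A) := by
    rw [mul_sub, mul_one, nonsing_inv_mul A ((isUnit_iff_isUnit_det A).mp hA)]; abel
  have : ‖A⁻¹‖ ≤ 1 + ‖A⁻¹‖ * ‖1 - A‖ :=
    calc ‖A⁻¹‖ = ‖1 + A⁻¹ * (1 - A)‖ := congrArg _ hAinv
      _ ≤ ‖(1 : Matrix n n ℝ)‖ + ‖A⁻¹‖ * ‖1 - A‖ := norm_add_le_of_le le_rfl (norm_mul_le _ _)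
      _ ≤ 1 + ‖A⁻¹‖ * ‖1 - A‖ := by grw [l2_opNorm_one_le]
  rw [← one_div (1 - ‖1 - A‖), le_div_iff₀ (by linarith)]
  linarith

lemma posDef_of_tendsto_of_l2_opNorm_sub_one_le {ι : Type*} {l : Filter ι} [l.NeBot]
    {γ : ι → Matrix n n ℝ} {g : Matrix n n ℝ} {r : ℝ} (hγ : Tendsto γ l (𝓝 g))
    (hsymm : ∀ i, (γ i).IsSymm) (hnear : ∀ᶠ i in l, ‖γ i - 1‖ ≤ r) (hr : r < 1) : g.PosDef :=
  posDef_of_l2_opNorm_sub_one_lt (isClosed_setOf_isSymm.mem_of_tendsto hγ (.of_forall hsymm))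
    ((le_of_tendsto (hγ.sub_const 1).norm hnear).trans_lt hr)

end Matrix

noncomputable def barrierExponent (K ε x : ℝ) : ℝ := K * (1 - x⁻¹) + (1 - x ^ (-ε))

lemma hasDerivAt_barrierExponent (K ε : ℝ) {x : ℝ} (hx : x ≠ 0) :
    HasDerivAt (barrierExponent K ε) (K * (x ^ 2)⁻¹ + ε * x ^ (-1 - ε)) x := by
  have hinv := ((hasDerivAt_inv hx).const_sub 1).const_mul K
  have hrpow := (hasDerivAt_rpow_const (p := -ε) (Or.inl hx)).const_sub 1
  refine (hinv.add hrpow).congr_deriv ?_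
  rw [show -ε - 1 = -1 - ε by ring]
  ring

lemma barrierExponent_mem_Icc {K ε x : ℝ} (hK : 0 ≤ K) (hε : 0 < ε) (hx : 1 ≤ x) :
    barrierExponent K ε x ∈ Icc 0 (K + 1) := by
  have hinv : x⁻¹ ∈ Icc 0 1 := ⟨by positivity, inv_le_one_of_one_le₀ hx⟩
  have hrpow : x ^ (-ε) ∈ Icc 0 1 :=
    ⟨by positivity, rpow_le_one_of_one_le_of_nonpos hx (by linarith)⟩
  constructor <;> unfold barrierExponent <;> nlinarith [hinv.1, hinv.2, hrpow.1, hrpow.2]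

section Asymptotics

variable {E : Type*} [NormedAddCommGroup E] [NormedSpace ℝ E]

theorem norm_le_of_norm_deriv_le_inv_sq_mul_add_rpow {f f' : ℝ → E} {K δ ε : ℝ}
    (hK : 0 ≤ K) (hδ : 0 < δ) (hε : 0 < ε) (hf : ∀ x ≥ 1, HasDerivAt f (f' x) x)
    (hf₁ : ‖f 1‖ ≤ δ)
    (hf' : ∀ x ≥ 1, ‖f x‖ ≤ δ * (1 + ε⁻¹) * exp (K + 1) →
      ‖f' x‖ ≤ K * (x ^ 2)⁻¹ * ‖f x‖ + δ * x ^ (-1 - ε))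
    {x : ℝ} (hx : 1 ≤ x) : ‖f x‖ ≤ δ * (1 + ε⁻¹) * exp (K + 1) := by
  set B : ℝ → ℝ := fun y => δ * (1 + ε⁻¹) * exp (barrierExponent K ε y)
  have hB : ∀ y ≥ 1, HasDerivAt B (B y * (K * (y ^ 2)⁻¹ + ε * y ^ (-1 - ε))) y := fun y hy =>
    ((hasDerivAt_barrierExponent K ε (by positivity)).exp.const_mul _).congr_deriv (by ring)
  have hB_ge : ∀ y ≥ 1, δ * (1 + ε⁻¹) ≤ B y := fun y hy =>
    le_mul_of_one_le_right (by positivity) (one_le_exp (barrierExponent_mem_Icc hK hε hy).1)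
  have hB_le : ∀ y ≥ 1, B y ≤ δ * (1 + ε⁻¹) * exp (K + 1) := fun y hy =>
    mul_le_mul_of_nonneg_left (exp_le_exp.mpr (barrierExponent_mem_Icc hK hε hy).2)
      (by positivity)
  have hδ_lt : ∀ y ≥ 1, δ < ε * B y := fun y hy =>
    calc δ < ε * (δ * (1 + ε⁻¹)) := by field_simp; linarith
      _ ≤ ε * B y := by gcongr; exact hB_ge y hy
  refine (image_norm_le_of_norm_deriv_right_lt_deriv_boundary' (a := 1) (b := x)
    (fun y hy => (hf y hy.1).continuousAt.continuousWithinAt)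
    (fun y hy => (hf y hy.1).hasDerivWithinAt)
    (hf₁.trans (by nlinarith [hB_ge 1 le_rfl, inv_pos.mpr hε]))
    (fun y hy => (hB y hy.1).continuousAt.continuousWithinAt)
    (fun y hy => (hB y hy.1).hasDerivWithinAt) fun y hy hfy => ?_) ⟨hx, le_rfl⟩ |>.trans
    (hB_le x hx)
  have hy : 1 ≤ y := hy.1
  calc ‖f' y‖ ≤ K * (y ^ 2)⁻¹ * B y + δ * y ^ (-1 - ε) := hfy ▸ hf' y hy (hfy ▸ hB_le y hy)
    _ < K * (y ^ 2)⁻¹ * B y + ε * B y * y ^ (-1 - ε) := by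
      gcongr; exact hδ_lt y hy
    _ = B y * (K * (y ^ 2)⁻¹ + ε * y ^ (-1 - ε)) := by ring

theorem exists_tendsto_atTop_of_norm_deriv_le [CompleteSpace E] {f f' : ℝ → E} {g : ℝ → ℝ}
    {a : ℝ} (hf : ∀ x ∈ Ioi a, HasDerivAt f (f' x) x) (hg : IntegrableOn g (Ioi a))
    (hf' : ∀ x ∈ Ioi a, ‖f' x‖ ≤ g x) : ∃ p, Tendsto f atTop (𝓝 p) := by
  have hderiv : ∀ x ∈ Ioi a, HasDerivAt f (deriv f x) x := fun x hx =>
    (hf x hx).differentiableAt.hasDerivAt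
  have hint : IntegrableOn (deriv f) (Ioi a) :=
    hg.mono' (aestronglyMeasurable_deriv f _) <|
      (ae_restrict_iff' measurableSet_Ioi).mpr <| .of_forall fun x hx => (hf x hx).deriv ▸ hf' x hx
  exact ⟨_, tendsto_limUnder_of_hasDerivAt_of_integrableOn_Ioi hderiv hint⟩

end Asymptotics

lemma integrableOn_Ioi_one_inv_sq_add_rpow (K δ : ℝ) {ε : ℝ} (hε : 0 < ε) :
    IntegrableOn (fun x : ℝ => K * (x ^ 2)⁻¹ + δ * x ^ (-1 - ε)) (Ioi 1) := by
  have hsq : IntegrableOn (fun x : ℝ => x ^ (-2 : ℝ)) (Ioi 1) :=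
    integrableOn_Ioi_rpow_of_lt (by norm_num) one_pos
  refine ((hsq.congr_fun (fun x hx => ?_) measurableSet_Ioi).const_mul K).add
    ((integrableOn_Ioi_rpow_of_lt (by linarith) one_pos).const_mul δ)
  simp [rpow_neg (zero_le_one.trans (le_of_lt hx))]

lemma abs_le_and_norm_le_of_norm_prod_le {E F : Type*} [SeminormedAddCommGroup E]
    [SeminormedAddCommGroup F] {a c : ℝ} {x : E} {y : F} (h : ‖(a, x, y)‖ ≤ c) :
    |a| ≤ c ∧ ‖x‖ ≤ c ∧ ‖y‖ ≤ c := by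
  simpa using h

local notation "M₂" => Matrix (Fin 2) (Fin 2) ℝ

noncomputable def nullStructureRHS (l : ℝ) (α : M₂) (a : ℝ) (h γ : M₂) : ℝ × M₂ × M₂ :=
  (-(l ^ 2)⁻¹ * (a ^ 2 + trace ((γ⁻¹ * h) ^ 2)),
    (-(2 * (l ^ 2)⁻¹)) • (h * γ⁻¹ * h) - (l ^ 2) • α,
    ((l ^ 2)⁻¹ * a) • γ + (2 * (l ^ 2)⁻¹) • h)

lemma abs_sq_add_trace_sq_le {a b : ℝ} {X : M₂} (ha : |a| ≤ b) (hX : ‖X‖ ≤ 2 * b)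
    (hb : b ≤ 1 / 4) : |a ^ 2 + trace (X ^ 2)| ≤ 5 * b := by
  have hb0 : 0 ≤ b := (abs_nonneg a).trans ha
  calc |a ^ 2 + trace (X ^ 2)| ≤ b ^ 2 + 2 * (2 * b) ^ 2 := by
        grw [abs_add_le, abs_trace_le_card_mul_l2_opNorm, norm_pow_le, hX, abs_pow, ha]; simp
    _ ≤ 5 * b := by nlinarith

lemma norm_nullStructureRHS_le {l a : ℝ} {α h γ γ₁ : M₂} (hγ : IsUnit γ)
    (hγ₁ : ‖γ₁ - 1‖ ≤ 1 / 4) (hsmall : ‖(a, h, γ - γ₁)‖ ≤ 1 / 4) :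
    ‖nullStructureRHS l α a h γ‖ ≤ 5 * (l ^ 2)⁻¹ * ‖(a, h, γ - γ₁)‖ + ‖(l ^ 2) • α‖ := by
  set b := ‖(a, h, γ - γ₁)‖
  obtain ⟨ha, hh, hγγ₁⟩ := abs_le_and_norm_le_of_norm_prod_le (le_refl b)
  have hb : 0 ≤ b := norm_nonneg _
  have hl : 0 ≤ (l ^ 2)⁻¹ := by positivity
  have hγ_near : ‖1 - γ‖ ≤ 1 / 2 := by
    rw [norm_sub_rev]
    calc ‖γ - 1‖ = ‖(γ - γ₁) + (γ₁ - 1)‖ := by rw [sub_add_sub_cancel]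
      _ ≤ 1 / 2 := by grw [norm_add_le]; linarith
  have hγ_inv : ‖γ⁻¹‖ ≤ 2 := by
    grw [l2_opNorm_nonsing_inv_le hγ (by linarith), hγ_near]; norm_num
  have hγ_norm : ‖γ‖ ≤ 3 / 2 := by
    calc ‖γ‖ = ‖1 - (1 - γ)‖ := by rw [sub_sub_cancel]
      _ ≤ 3 / 2 := by grw [norm_sub_le, l2_opNorm_one_le, hγ_near]; norm_num
  have h_a : |-(l ^ 2)⁻¹ * (a ^ 2 + trace ((γ⁻¹ * h) ^ 2))| ≤ 5 * (l ^ 2)⁻¹ * b := by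
    rw [abs_mul, abs_neg, abs_of_nonneg hl, mul_comm 5, mul_assoc]
    gcongr
    exact abs_sq_add_trace_sq_le ha (by grw [norm_mul_le, hγ_inv, hh]) hsmall
  have h_h : ‖(-(2 * (l ^ 2)⁻¹)) • (h * γ⁻¹ * h) - (l ^ 2) • α‖ ≤
      5 * (l ^ 2)⁻¹ * b + ‖(l ^ 2) • α‖ := by
    calc _ ≤ 2 * (l ^ 2)⁻¹ * (b * 2 * b) + ‖(l ^ 2) • α‖ := by
          grw [norm_sub_le, norm_smul, norm_mul₃_le, hh, hγ_inv, norm_neg,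
            Real.norm_of_nonneg (by positivity)]
          gcongr
      _ ≤ 5 * (l ^ 2)⁻¹ * b + ‖(l ^ 2) • α‖ := by
          nlinarith [mul_le_mul_of_nonneg_left (show 4 * b ^ 2 ≤ 5 * b by nlinarith) hl]
  have h_γ : ‖((l ^ 2)⁻¹ * a) • γ + (2 * (l ^ 2)⁻¹) • h‖ ≤ 5 * (l ^ 2)⁻¹ * b := by
    calc _ ≤ ‖((l ^ 2)⁻¹ * a) • γ‖ + ‖(2 * (l ^ 2)⁻¹) • h‖ := norm_add_le _ _
      _ = (l ^ 2)⁻¹ * |a| * ‖γ‖ + 2 * (l ^ 2)⁻¹ * ‖h‖ := by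
          simp only [norm_smul, norm_mul, Real.norm_eq_abs, abs_of_nonneg hl, abs_two]
      _ ≤ (l ^ 2)⁻¹ * b * (3 / 2) + 2 * (l ^ 2)⁻¹ * b := by gcongr
      _ ≤ 5 * (l ^ 2)⁻¹ * b := by linarith [mul_nonneg hl hb]
  simp only [nullStructureRHS, Prod.norm_mk, Real.norm_eq_abs, max_le_iff]
  have hα : 0 ≤ ‖(l ^ 2) • α‖ := norm_nonneg _
  exact ⟨by linarith, h_h, by linarith⟩

/-- ODE content of Lemma 4.1: asymptotics of the expansion correction `a`,
shear components `h`, and metric components `γ` (symmetric 2×2 matrices, with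
the L2 operator norm on matrices) along an affinely parametrized null
hypersurface, with inhomogeneity `λ² α` from the Weyl curvature. -/
theorem penrose_null_structure_asymptotics :
    ∀ ε : ℝ, 0 < ε → ∃ δ₀ > (0:ℝ), ∃ C > (0:ℝ), ∀ δ : ℝ, 0 < δ → δ ≤ δ₀ →
    ∀ (a : ℝ → ℝ) (h γ α : ℝ → Matrix (Fin 2) (Fin 2) ℝ),
      (∀ l, (h l).IsSymm) → (∀ l, (γ l).IsSymm) → (∀ l, (α l).IsSymm) →
      (∀ l ≥ (1:ℝ), IsUnit (γ l)) →
      ContinuousOn α (Set.Ici 1) →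
      (∀ l ≥ (1:ℝ), HasDerivAt a
        (-(l ^ 2)⁻¹ * ((a l) ^ 2 + Matrix.trace (((γ l)⁻¹ * h l) ^ 2))) l) →
      (∀ l ≥ (1:ℝ), HasDerivAt h
        ((-(2 * (l ^ 2)⁻¹)) • (h l * (γ l)⁻¹ * h l) - (l ^ 2) • α l) l) →
      (∀ l ≥ (1:ℝ), HasDerivAt γ
        (((l ^ 2)⁻¹ * a l) • γ l + (2 * (l ^ 2)⁻¹) • h l) l) →
      (∀ l ≥ (1:ℝ), ‖(l ^ 2) • α l‖ ≤ δ * l ^ (-1 - ε)) →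
      |a 1| ≤ δ → ‖h 1‖ ≤ δ → ‖γ 1 - 1‖ ≤ 1 / 4 →
      ((∀ l ≥ (1:ℝ), |a l| ≤ C * δ ∧ ‖h l‖ ≤ C * δ ∧ ‖γ l - γ 1‖ ≤ C * δ) ∧
        ∃ (aInf : ℝ) (hInf gInf : Matrix (Fin 2) (Fin 2) ℝ),
          hInf.IsSymm ∧ gInf.IsSymm ∧
          Tendsto a atTop (nhds aInf) ∧
          Tendsto h atTop (nhds hInf) ∧
          Tendsto γ atTop (nhds gInf) ∧
          gInf.PosDef) := by
  intro ε hε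
  set C : ℝ := (1 + ε⁻¹) * exp 6
  have hC : 0 < C := by positivity
  refine ⟨1 / (4 * C), by positivity, C, hC, fun δ hδ hδ₀ a h γ α hh hγ _ hγu _ ha' hh' hγ' hα
    ha₁ hh₁ hγ₁ => ?_⟩
  have hCδ : C * δ ≤ 1 / 4 := by
    rw [le_div_iff₀ (by positivity)] at hδ₀; rw [le_div_iff₀ four_pos]; nlinarith
  set F : ℝ → ℝ × M₂ × M₂ := fun l => (a l, h l, γ l - γ 1)
  have hF : ∀ l ≥ 1, HasDerivAt F (nullStructureRHS l (α l) (a l) (h l) (γ l)) l := fun l hl =>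
    (ha' l hl).prodMk ((hh' l hl).prodMk ((hγ' l hl).sub_const (γ 1)))
  have hF' : ∀ l ≥ 1, ‖F l‖ ≤ C * δ →
      ‖nullStructureRHS l (α l) (a l) (h l) (γ l)‖ ≤ 5 * (l ^ 2)⁻¹ * ‖F l‖ + δ * l ^ (-1 - ε) :=
    fun l hl hFl => (norm_nullStructureRHS_le (hγu l hl) hγ₁ (hFl.trans hCδ)).trans
      (by grw [hα l hl])
  have hFC : ∀ l ≥ 1, ‖F l‖ ≤ C * δ := fun l hl => by
    have hC' : δ * (1 + ε⁻¹) * exp (5 + 1) = C * δ := by norm_num [C]; ring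
    exact hC' ▸ norm_le_of_norm_deriv_le_inv_sq_mul_add_rpow (K := 5) (by norm_num) hδ hε hF
      (by simp [F, ha₁, hh₁]) (fun l hl hFl => hF' l hl (hC' ▸ hFl)) hl
  obtain ⟨p, hp⟩ := exists_tendsto_atTop_of_norm_deriv_le (fun l hl => hF l (le_of_lt hl))
    (integrableOn_Ioi_one_inv_sq_add_rpow (5 * (C * δ)) δ hε) fun l hl => by
      grw [hF' l hl.le (hFC l hl.le), hFC l hl.le]; linarith
  have hbounds := fun l hl => abs_le_and_norm_le_of_norm_prod_le (hFC l hl)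
  have hγ_near : ∀ l ≥ 1, ‖γ l - 1‖ ≤ 1 / 2 := fun l hl => by
    grw [← sub_add_sub_cancel (γ l) (γ 1) 1, norm_add_le, (hbounds l hl).2.2, hCδ, hγ₁]; norm_num
  have hγ_lim : Tendsto γ atTop (𝓝 (p.2.2 + γ 1)) := by
    simpa [F] using hp.snd_nhds.snd_nhds.add_const (γ 1)
  exact ⟨hbounds, p.1, p.2.1, p.2.2 + γ 1,
    isClosed_setOf_isSymm.mem_of_tendsto hp.snd_nhds.fst_nhds (.of_forall hh),
    isClosed_setOf_isSymm.mem_of_tendsto hγ_lim (.of_forall hγ), hp.fst_nhds,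
    hp.snd_nhds.fst_nhds, hγ_lim, posDef_of_tendsto_of_l2_opNorm_sub_one_le hγ_lim hγ
      (eventually_atTop.mpr ⟨1, hγ_near⟩) (by norm_num)⟩
end

section
/- Fix ε > 0, C ≥ 0, and a finite-dimensional real normed space E. Let A : [1,∞) → (continuous linear endomorphisms of E) and f, g : [1,∞) → E be continuous with ‖A(λ)‖ ≤ C λ⁻², ‖f(λ)‖ ≤ C λ⁻², and ‖g(λ)‖ ≤ C λ^(−1−ε) for all λ ≥ 1. For real numbers F and G, let y_{F,G} : [1,∞) → E denote the unique solution of y'(λ) = A(λ) y(λ) + F·f(λ) + G·g(λ) for all λ ≥ 1 with y(1) = 0. Then there exist functions b₁, b₂ : [1,∞) → E, depending only on A, f, g (and not on F, G), each bounded in norm by a constant depending only on C and ε and each converging to a limit in E as λ → ∞, such that y_{F,G}(λ) = F·b₁(λ) + G·b₂(λ) for all λ ≥ 1 and all F, G ∈ ℝ. -/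
/-!
By superposition, `F • b₁ + G • b₂` solves `y' = A y + F • f + G • g` whenever `b₁` and `b₂` solve
the equations driven by `f` and by `g` alone from `b 1 = 0`; since `‖A‖ ≤ C` on `[1, ∞)` the
solution is unique, so it is this one. A linear field admits Picard–Lindelöf steps of a uniform
length, hence the profiles `b₁`, `b₂` exist on all of `[1, ∞)`. They are bounded independently
of `E` by comparison with an explicit barrier, and then `b' = A b + h = O(t^(-1-ε))` is
integrable, so each profile converges.
-/

open Filter Set Topology NNReal

section IntegralCurve

variable {E : Type*} [NormedAddCommGroup E] [NormedSpace ℝ E] {v : ℝ → E → E} {y z : ℝ → E}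
  {a b c : ℝ}

lemma IsIntegralCurveOn.hasDerivWithinAt_Ici (hy : IsIntegralCurveOn y v (Icc a b))
    {t : ℝ} (ht : t ∈ Ico a b) : HasDerivWithinAt y (v t (y t)) (Ici t) t :=
  (hy t (Ico_subset_Icc_self ht)).mono_of_mem_nhdsWithin <|
    mem_of_superset (Icc_mem_nhdsGE ht.2) (Icc_subset_Icc_left ht.1)

lemma IsIntegralCurveOn.eqOn_Icc {K : ℝ≥0} (hv : ∀ t ∈ Ico a b, LipschitzWith K (v t))
    (hy : IsIntegralCurveOn y v (Icc a b)) (hz : IsIntegralCurveOn z v (Icc a b))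
    (ha : y a = z a) : EqOn y z (Icc a b) :=
  ODE_solution_unique_of_mem_Icc_right (s := fun _ ↦ univ) (fun t ht ↦ (hv t ht).lipschitzOnWith)
    hy.continuousOn (fun _ ht ↦ hy.hasDerivWithinAt_Ici ht) (fun _ _ ↦ trivial)
    hz.continuousOn (fun _ ht ↦ hz.hasDerivWithinAt_Ici ht) (fun _ _ ↦ trivial) ha

lemma IsIntegralCurveOn.piecewise_Icc (hab : a ≤ b) (hbc : b ≤ c)
    (hy : IsIntegralCurveOn y v (Icc a b)) (hz : IsIntegralCurveOn z v (Icc b c))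
    (hyz : y b = z b) :
    IsIntegralCurveOn (fun t ↦ if t ≤ b then y t else z t) v (Icc a c) := by
  set w : ℝ → E := fun t ↦ if t ≤ b then y t else z t
  have hwy : EqOn w y (Icc a b) := fun t ht ↦ if_pos ht.2
  have hwz : EqOn w z (Icc b c) := fun t ht ↦ by
    rcases ht.1.eq_or_lt with rfl | hlt
    · exact (if_pos le_rfl).trans hyz
    · exact if_neg hlt.not_ge
  -- off a closed piece the derivative within it is vacuous, so it suffices to glue pointwise
  have piece : ∀ {u : ℝ → E} {s : Set ℝ}, IsClosed s → IsIntegralCurveOn u v s → EqOn w u s →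
      ∀ t, HasDerivWithinAt w (v t (w t)) s t := by
    intro u s hs hu hwu t
    by_cases ht : t ∈ s
    · rw [hwu ht]; exact (hu t ht).congr hwu (hwu ht)
    · exact HasFDerivWithinAt.of_notMem_closure (by rwa [hs.closure_eq])
  intro t _
  rw [← Icc_union_Icc_eq_Icc hab hbc]
  exact (piece isClosed_Icc hy hwy t).union (piece isClosed_Icc hz hwz t)

lemma exists_isIntegralCurveOn_Ici_of_forall_Icc {K : ℝ≥0} {t₀ : ℝ} {x₀ : E}
    (hv : ∀ t ∈ Ici t₀, LipschitzWith K (v t))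
    (hex : ∀ T, ∃ y : ℝ → E, y t₀ = x₀ ∧ IsIntegralCurveOn y v (Icc t₀ T)) :
    ∃ y : ℝ → E, y t₀ = x₀ ∧ IsIntegralCurveOn y v (Ici t₀) := by
  choose sol hsol₀ hsol using hex
  have hagree : ∀ {S T}, S ≤ T → EqOn (sol S) (sol T) (Icc t₀ S) := fun {S T} hST ↦
    (hsol S).eqOn_Icc (fun t ht ↦ hv t ht.1) ((hsol T).mono (Icc_subset_Icc_right hST))
      ((hsol₀ S).trans (hsol₀ T).symm)
  refine ⟨fun t ↦ sol t t, hsol₀ t₀, fun t ht ↦ ?_⟩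
  have heq : EqOn (fun s ↦ sol s s) (sol (t + 1)) (Icc t₀ (t + 1)) := fun s hs ↦
    hagree hs.2 (right_mem_Icc.2 hs.1)
  have hmem : Icc t₀ (t + 1) ∈ 𝓝[Ici t₀] t :=
    inter_mem_nhdsWithin _ (Iic_mem_nhds (lt_add_one t))
  have ht' : t ∈ Icc t₀ (t + 1) := ⟨ht, by linarith⟩
  rw [heq ht']
  exact ((hsol (t + 1) t ht').congr heq (heq ht')).mono_of_mem_nhdsWithin hmem

section Affine

variable {A : ℝ → E →L[ℝ] E} {h : ℝ → E}

lemma lipschitzWith_clm_add_const {L : E →L[ℝ] E} {K : ℝ≥0} (hL : ‖L‖ ≤ K) (c : E) :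
    LipschitzWith K fun x ↦ L x + c :=
  LipschitzWith.of_dist_le_mul fun x x' ↦ by
    rw [dist_add_right, dist_eq_norm, dist_eq_norm, ← map_sub]
    exact L.le_of_opNorm_le hL _

lemma IsIntegralCurveOn.smul_add_smul_affine {h₁ h₂ y₁ y₂ : ℝ → E} {s : Set ℝ}
    (hy₁ : IsIntegralCurveOn y₁ (fun t x ↦ A t x + h₁ t) s)
    (hy₂ : IsIntegralCurveOn y₂ (fun t x ↦ A t x + h₂ t) s) (F G : ℝ) :
    IsIntegralCurveOn (fun t ↦ F • y₁ t + G • y₂ t) (fun t x ↦ A t x + (F • h₁ t + G • h₂ t)) s :=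
  fun t ht ↦ (((hy₁ t ht).const_smul F).add ((hy₂ t ht).const_smul G)).congr_deriv <| by
    simp only [map_add, map_smul, smul_add]
    abel

variable [CompleteSpace E]

lemma exists_isIntegralCurveOn_Icc_affine_of_two_mul_le {K : ℝ≥0} {δ : ℝ} (hδ : 0 ≤ δ)
    (hKδ : 2 * K * δ ≤ 1) (hAc : ContinuousOn A (Icc a (a + δ)))
    (hhc : ContinuousOn h (Icc a (a + δ))) (hAK : ∀ t ∈ Icc a (a + δ), ‖A t‖ ≤ K)
    (hhK : ∀ t ∈ Icc a (a + δ), ‖h t‖ ≤ K) (x₀ : E) :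
    ∃ y : ℝ → E, y a = x₀ ∧ IsIntegralCurveOn y (fun t x ↦ A t x + h t) (Icc a (a + δ)) := by
  -- on the ball of radius `‖x₀‖ + 1` the field is bounded by `2K(‖x₀‖ + 1)`
  set R : ℝ≥0 := ‖x₀‖₊ + 1
  have hpl : IsPicardLindelof (fun t x ↦ A t x + h t) (tmin := a) (tmax := a + δ)
      ⟨a, left_mem_Icc.2 (by linarith)⟩ x₀ R 0 (2 * K * R) K :=
    { lipschitzOnWith := fun t ht ↦ (lipschitzWith_clm_add_const (hAK t ht) _).lipschitzOnWith
      continuousOn := fun _ _ ↦ (hAc.clm_apply continuousOn_const).add hhc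
      norm_le := fun t ht x hx ↦ by
        have hx : ‖x‖ ≤ 2 * ‖x₀‖ + 1 := by
          have := norm_le_norm_add_norm_sub' x x₀
          rw [Metric.mem_closedBall, dist_eq_norm] at hx
          push_cast [R] at hx
          linarith
        calc ‖A t x + h t‖ ≤ K * ‖x‖ + K :=
              (norm_add_le _ _).trans (add_le_add ((A t).le_of_opNorm_le (hAK t ht) x) (hhK t ht))
          _ ≤ K * (2 * ‖x₀‖ + 1) + K := by gcongr
          _ = ↑(2 * K * R) := by push_cast [R]; ring
      mul_max_le := by
        have : (2 * K * R : ℝ) * δ ≤ R := by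
          nlinarith [show (0 : ℝ) ≤ R from R.2]
        simpa [hδ] using this }
  exact hpl.exists_eq_forall_mem_Icc_hasDerivWithinAt₀

lemma exists_isIntegralCurveOn_Ici_affine {K : ℝ≥0} {t₀ : ℝ} (hAc : ContinuousOn A (Ici t₀))
    (hhc : ContinuousOn h (Ici t₀)) (hAK : ∀ t ∈ Ici t₀, ‖A t‖ ≤ K)
    (hhK : ∀ t ∈ Ici t₀, ‖h t‖ ≤ K) (x₀ : E) :
    ∃ y : ℝ → E, y t₀ = x₀ ∧ IsIntegralCurveOn y (fun t x ↦ A t x + h t) (Ici t₀) := by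
  set δ : ℝ := (2 * K + 1)⁻¹
  have hδ : 0 < δ := by positivity
  have hKδ : 2 * K * δ ≤ 1 := by
    rw [← div_eq_mul_inv, div_le_one (by positivity)]
    linarith
  have hstep : ∀ a ∈ Ici t₀, ∀ x : E, ∃ y : ℝ → E, y a = x ∧
      IsIntegralCurveOn y (fun t x ↦ A t x + h t) (Icc a (a + δ)) := fun a ha ↦
    have hsub : Icc a (a + δ) ⊆ Ici t₀ := fun t ht ↦ le_trans ha ht.1
    exists_isIntegralCurveOn_Icc_affine_of_two_mul_le hδ.le hKδ (hAc.mono hsub) (hhc.mono hsub)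
      (fun t ht ↦ hAK t (hsub ht)) (fun t ht ↦ hhK t (hsub ht))
  have hsteps : ∀ n : ℕ, ∃ y : ℝ → E, y t₀ = x₀ ∧
      IsIntegralCurveOn y (fun t x ↦ A t x + h t) (Icc t₀ (t₀ + n * δ)) := by
    intro n
    induction n with
    | zero =>
      obtain ⟨y, hy₀, hy⟩ := hstep t₀ self_mem_Ici x₀
      exact ⟨y, hy₀, hy.mono (Icc_subset_Icc_right (by simp [hδ.le]))⟩
    | succ n ih =>
      obtain ⟨y, hy₀, hy⟩ := ih
      have hn : t₀ ≤ t₀ + n * δ := le_add_of_nonneg_right (by positivity)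
      obtain ⟨z, hz₀, hz⟩ := hstep _ hn (y (t₀ + n * δ))
      refine ⟨fun t ↦ if t ≤ t₀ + n * δ then y t else z t, (if_pos hn).trans hy₀, ?_⟩
      rw [Nat.cast_succ, add_one_mul, ← add_assoc]
      exact hy.piecewise_Icc hn (by linarith) hz hz₀.symm
  refine exists_isIntegralCurveOn_Ici_of_forall_Icc
    (fun t ht ↦ lipschitzWith_clm_add_const (hAK t ht) (h t)) fun T ↦ ?_
  obtain ⟨n, hn⟩ := exists_nat_ge ((T - t₀) / δ)
  obtain ⟨y, hy₀, hy⟩ := hsteps n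
  refine ⟨y, hy₀, hy.mono (Icc_subset_Icc_right ?_)⟩
  rw [div_le_iff₀ hδ] at hn
  linarith

end Affine

end IntegralCurve

open Real MeasureTheory

lemma inv_sq_eq_rpow {t : ℝ} (ht : 0 ≤ t) : (t ^ 2)⁻¹ = t ^ (-1 - 1 : ℝ) := by
  rw [show (-1 - 1 : ℝ) = -(2 : ℕ) by norm_num, rpow_neg ht, Real.rpow_natCast]

lemma mul_inv_sq_le_self {C t : ℝ} (hC : 0 ≤ C) (ht : 1 ≤ t) : C * (t ^ 2)⁻¹ ≤ C :=
  mul_le_of_le_one_right hC (inv_le_one_of_one_le₀ (one_le_pow₀ ht))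

lemma hasDerivAt_mul_one_sub_rpow_mul_exp {C ε M s : ℝ} (hs : 0 < s) :
    HasDerivAt (fun s ↦ M * (1 - s ^ (-ε)) * exp (-(C / s)))
      (C * (s ^ 2)⁻¹ * (M * (1 - s ^ (-ε)) * exp (-(C / s)))
        + M * ε * s ^ (-1 - ε) * exp (-(C / s))) s := by
  have hpow := ((hasDerivAt_rpow_const (p := -ε) (Or.inl hs.ne')).const_sub 1).const_mul M
  have hq : HasDerivAt (fun s ↦ -(C / s)) (C * (s ^ 2)⁻¹) s := by
    simpa only [div_eq_mul_inv, mul_neg, neg_neg] using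
      ((hasDerivAt_inv hs.ne').const_mul C).fun_neg
  refine (hpow.mul hq.exp).congr_deriv ?_
  rw [show -ε - 1 = -1 - ε by ring]
  ring

section Decay

variable {E : Type*} [NormedAddCommGroup E] [NormedSpace ℝ E] {A : ℝ → E →L[ℝ] E} {h y : ℝ → E}
  {C ε : ℝ}

lemma norm_le_of_isIntegralCurveOn_affine_of_decay (hC : 0 ≤ C) (hε : 0 < ε)
    (hA : ∀ t ≥ 1, ‖A t‖ ≤ C * (t ^ 2)⁻¹) (hh : ∀ t ≥ 1, ‖h t‖ ≤ C * t ^ (-1 - ε))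
    (hy : IsIntegralCurveOn y (fun t x ↦ A t x + h t) (Ici 1)) (hy₁ : y 1 = 0)
    {t : ℝ} (ht : 1 ≤ t) : ‖y t‖ ≤ (C + 1) * exp C / ε := by
  set M := (C + 1) * exp C / ε
  -- the barrier `B` is a strict supersolution of `B' = C s⁻² B + C s^(-1-ε)` with `B 1 = 0`
  set B : ℝ → ℝ := fun s ↦ M * (1 - s ^ (-ε)) * exp (-(C / s))
  set B' : ℝ → ℝ := fun s ↦ C * (s ^ 2)⁻¹ * B s + M * ε * s ^ (-1 - ε) * exp (-(C / s))
  have hB : ∀ s ∈ Icc 1 t, HasDerivAt B (B' s) s := fun s hs ↦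
    hasDerivAt_mul_one_sub_rpow_mul_exp (by linarith [hs.1])
  have hBt : B t ≤ M := by
    have hM : 0 ≤ M := by positivity
    have hpow₀ : 0 ≤ t ^ (-ε) := rpow_nonneg (by linarith) _
    have hpow₁ : t ^ (-ε) ≤ 1 := rpow_le_one_of_one_le_of_nonpos ht (by linarith)
    have hexp : exp (-(C / t)) ≤ 1 := exp_le_one_iff.2 (neg_nonpos.2 (by positivity))
    calc B t ≤ M * (1 - t ^ (-ε)) := mul_le_of_le_one_right (mul_nonneg hM (by linarith)) hexp
      _ ≤ M := mul_le_of_le_one_right hM (by linarith)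
  refine le_trans (image_norm_le_of_norm_deriv_right_lt_deriv_boundary' (a := 1) (b := t)
    (f' := fun s ↦ A s (y s) + h s) (hy.continuousOn.mono Icc_subset_Ici_self)
    (fun s hs ↦ (hy s hs.1).mono (Ici_subset_Ici.2 hs.1)) (by simp [hy₁, B])
    (fun s hs ↦ (hB s hs).continuousAt.continuousWithinAt)
    (fun s hs ↦ (hB s (Ico_subset_Icc_self hs)).hasDerivWithinAt) ?_ ⟨ht, le_rfl⟩) hBt
  intro s hs hys
  have hs1 : 1 ≤ s := hs.1
  have hMε : M * ε = (C + 1) * exp C := div_mul_cancel₀ _ hε.ne'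
  have hgrowth : C < M * ε * exp (-(C / s)) := by
    have : 1 ≤ exp (C - C / s) := one_le_exp (sub_nonneg.2 (div_le_self hC hs1))
    rw [hMε, mul_assoc, ← exp_add, ← sub_eq_add_neg]
    nlinarith
  calc ‖A s (y s) + h s‖ ≤ ‖A s‖ * ‖y s‖ + ‖h s‖ :=
        (norm_add_le _ _).trans (add_le_add_left ((A s).le_opNorm _) _)
    _ ≤ C * (s ^ 2)⁻¹ * B s + C * s ^ (-1 - ε) := by
        rw [← hys]; gcongr; exacts [hA s hs1, hh s hs1]
    _ < B' s := by
        have : 0 < s ^ (-1 - ε) := rpow_pos_of_pos (by linarith) _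
        simp only [B']; nlinarith

lemma tendsto_of_isIntegralCurveOn_affine_of_decay [CompleteSpace E] (hε : 0 < ε)
    (hAc : ContinuousOn A (Ici 1)) (hhc : ContinuousOn h (Ici 1))
    (hA : ∀ t ≥ 1, ‖A t‖ ≤ C * (t ^ 2)⁻¹) (hh : ∀ t ≥ 1, ‖h t‖ ≤ C * t ^ (-1 - ε))
    (hy : IsIntegralCurveOn y (fun t x ↦ A t x + h t) (Ici 1)) {M : ℝ}
    (hM : ∀ t ≥ 1, ‖y t‖ ≤ M) : ∃ L, Tendsto y atTop (𝓝 L) := by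
  have hM₀ : 0 ≤ M := (norm_nonneg _).trans (hM 1 le_rfl)
  have hmajorant : IntegrableOn (fun t ↦ C * M * t ^ (-1 - 1 : ℝ) + C * t ^ (-1 - ε)) (Ioi 1) :=
    ((integrableOn_Ioi_rpow_of_lt (by norm_num) one_pos).const_mul _).add
      ((integrableOn_Ioi_rpow_of_lt (by linarith) one_pos).const_mul _)
  have hintegrable : IntegrableOn (fun t ↦ A t (y t) + h t) (Ioi 1) := by
    refine hmajorant.mono' (((hAc.clm_apply hy.continuousOn).add hhc).mono Ioi_subset_Ici_self
      |>.aestronglyMeasurable measurableSet_Ioi) ?_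
    filter_upwards [ae_restrict_mem measurableSet_Ioi] with t (ht : 1 < t)
    rw [← inv_sq_eq_rpow (by linarith)]
    calc ‖A t (y t) + h t‖ ≤ ‖A t‖ * ‖y t‖ + ‖h t‖ :=
          (norm_add_le _ _).trans (add_le_add_left ((A t).le_opNorm _) _)
      _ ≤ C * (t ^ 2)⁻¹ * M + C * t ^ (-1 - ε) := by
          gcongr
          · exact (norm_nonneg _).trans (hA t ht.le)
          exacts [hA t ht.le, hM t ht.le, hh t ht.le]
      _ = C * M * (t ^ 2)⁻¹ + C * t ^ (-1 - ε) := by ring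
  exact ⟨_, tendsto_limUnder_of_hasDerivAt_of_integrableOn_Ioi
    (fun t (ht : 1 < t) ↦ (hy t ht.le).hasDerivAt (Ici_mem_nhds ht)) hintegrable⟩

lemma exists_bounded_tendsto_isIntegralCurveOn_affine [CompleteSpace E] (hC : 0 ≤ C)
    (hε : 0 < ε) (hAc : ContinuousOn A (Ici 1)) (hhc : ContinuousOn h (Ici 1))
    (hA : ∀ t ≥ 1, ‖A t‖ ≤ C * (t ^ 2)⁻¹) (hh : ∀ t ≥ 1, ‖h t‖ ≤ C * t ^ (-1 - ε)) :
    ∃ b : ℝ → E, b 1 = 0 ∧ IsIntegralCurveOn b (fun t x ↦ A t x + h t) (Ici 1) ∧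
      (∀ t ≥ 1, ‖b t‖ ≤ (C + 1) * exp C / ε) ∧ ∃ L, Tendsto b atTop (𝓝 L) := by
  obtain ⟨b, hb₁, hb⟩ := exists_isIntegralCurveOn_Ici_affine (K := ⟨C, hC⟩) hAc hhc
    (fun t ht ↦ (hA t ht).trans (mul_inv_sq_le_self hC ht))
    (fun t ht ↦ (hh t ht).trans
      (mul_le_of_le_one_right hC (rpow_le_one_of_one_le_of_nonpos ht (by linarith))))
    (0 : E)
  have hbM := fun t (ht : 1 ≤ t) ↦
    norm_le_of_isIntegralCurveOn_affine_of_decay hC hε hA hh hb hb₁ ht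
  exact ⟨b, hb₁, hb, hbM, tendsto_of_isIntegralCurveOn_affine_of_decay hε hAc hhc hA hh hb hbM⟩

end Decay

/-- ODE content of Lemma 4.2: linear splitting of solutions of the linearized
null structure equations into fixed bounded convergent profiles `b₁, b₂`
multiplied by the scalar functionals `F, G` of the deformation. -/
theorem penrose_linearized_splitting (ε C : ℝ) (hε : 0 < ε) (hC : 0 ≤ C) :
    ∃ M : ℝ, ∀ (E : Type) [NormedAddCommGroup E] [NormedSpace ℝ E] [FiniteDimensional ℝ E],
    ∀ (A : ℝ → E →L[ℝ] E) (f g : ℝ → E),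
      ContinuousOn A (Set.Ici 1) → ContinuousOn f (Set.Ici 1) →
      ContinuousOn g (Set.Ici 1) →
      (∀ l ≥ (1:ℝ), ‖A l‖ ≤ C * (l ^ 2)⁻¹) →
      (∀ l ≥ (1:ℝ), ‖f l‖ ≤ C * (l ^ 2)⁻¹) →
      (∀ l ≥ (1:ℝ), ‖g l‖ ≤ C * l ^ (-1 - ε)) →
      ∃ b₁ b₂ : ℝ → E,
        (∀ l ≥ (1:ℝ), ‖b₁ l‖ ≤ M ∧ ‖b₂ l‖ ≤ M) ∧
        (∃ L₁ : E, Tendsto b₁ atTop (nhds L₁)) ∧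
        (∃ L₂ : E, Tendsto b₂ atTop (nhds L₂)) ∧
        ∀ (F G : ℝ) (y : ℝ → E), y 1 = 0 →
          (∀ l ≥ (1:ℝ), HasDerivAt y (A l (y l) + F • f l + G • g l) l) →
          ∀ l ≥ (1:ℝ), y l = F • b₁ l + G • b₂ l := by
  refine ⟨max ((C + 1) * exp C / 1) ((C + 1) * exp C / ε), ?_⟩
  intro E _ _ _ A f g hAc hfc hgc hA hf hg
  -- `l⁻²` is the decay rate `l^(-1-ε)` with `ε = 1`
  have hf' : ∀ l ≥ (1:ℝ), ‖f l‖ ≤ C * l ^ (-1 - 1 : ℝ) := fun l hl ↦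
    (hf l hl).trans_eq (by rw [inv_sq_eq_rpow (by linarith)])
  obtain ⟨b₁, hb₁1, hb₁, hb₁M, hb₁L⟩ :=
    exists_bounded_tendsto_isIntegralCurveOn_affine hC one_pos hAc hfc hA hf'
  obtain ⟨b₂, hb₂1, hb₂, hb₂M, hb₂L⟩ :=
    exists_bounded_tendsto_isIntegralCurveOn_affine hC hε hAc hgc hA hg
  refine ⟨b₁, b₂, fun l hl ↦ ⟨(hb₁M l hl).trans (le_max_left _ _),
    (hb₂M l hl).trans (le_max_right _ _)⟩, hb₁L, hb₂L, fun F G y hy₁ hy l hl ↦ ?_⟩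
  have hy' : IsIntegralCurveOn y (fun t x ↦ A t x + (F • f t + G • g t)) (Icc 1 l) :=
    fun t ht ↦ by simpa only [add_assoc] using (hy t ht.1).hasDerivWithinAt
  have hAC : ∀ t ∈ Ico 1 l, ‖A t‖ ≤ (⟨C, hC⟩ : ℝ≥0) := fun t ht ↦
    (hA t ht.1).trans (mul_inv_sq_le_self hC ht.1)
  refine hy'.eqOn_Icc (fun t ht ↦ lipschitzWith_clm_add_const (hAC t ht) _)
    ((hb₁.smul_add_smul_affine hb₂ F G).mono Icc_subset_Ici_self)
    (by simp [hy₁, hb₁1, hb₂1]) ⟨hl, le_rfl⟩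
end

section
/- Let m > 0 and 0 ≤ δ ≤ 1/5. Let a, g : [1,∞) → ℝ be continuous with |a(λ)| ≤ δ and g(λ) ≥ (1 − δ)/(2 m² λ²) for all λ ≥ 1, and let z : [1,∞) → ℝ be differentiable with z(1) = 0 and z'(λ) = −λ⁻² a(λ) z(λ) + g(λ) for all λ ≥ 1. Then z(λ) ≥ (λ − 1)/(4 m² λ) for all λ ≥ 1; in particular z(λ) > 0 for all λ > 1. If moreover g(λ) ≤ C λ⁻² for all λ ≥ 1 and some constant C, then z(λ) converges to a finite limit as λ → ∞. -/
/-!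
Let `A` be an antiderivative of `λ⁻² a` with `A 1 = 0`, so that `|A| ≤ δ ∫₁^∞ s⁻² ds = δ`.
The integrating factor turns the equation into `(e^A z)' = e^A g ≥ e^{-δ} (1 - δ) / (2 m² λ²)`,
hence `e^A z ≥ e^{-δ} (1 - δ) (1 - λ⁻¹) / (2 m²)` and `z ≥ e^{-2δ} (1 - δ) (1 - λ⁻¹) / (2 m²)`;
for `δ ≤ 1/5` the constant satisfies `e^{-2δ} (1 - δ) ≥ (1 - δ)³ ≥ 1/2`.
If `g = O(λ⁻²)`, the derivatives of both `A` and `e^A z` are `O(λ⁻²)`, so both converge, and so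
does `z = e^{-A} (e^A z)`.
-/

open Filter Real Set Topology

theorem sub_le_mul_inv_sub_inv_of_deriv_le {F F' : ℝ → ℝ} {a b c : ℝ} (ha : 0 < a) (hab : a ≤ b)
    (hF : ∀ x ∈ Icc a b, HasDerivAt F (F' x) x) (hF' : ∀ x ∈ Icc a b, F' x ≤ c * (x ^ 2)⁻¹) :
    F b - F a ≤ c * (a⁻¹ - b⁻¹) := by
  have hB : ∀ x ∈ Icc a b,
      HasDerivAt (fun y => F a + c * (a⁻¹ - y⁻¹)) (c * (x ^ 2)⁻¹) x := fun x hx => by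
    simpa using
      (((hasDerivAt_inv (ha.trans_le hx.1).ne').const_sub a⁻¹).const_mul c).const_add (F a)
  have := image_le_of_deriv_right_le_deriv_boundary
    (fun x hx => (hF x hx).continuousAt.continuousWithinAt)
    (fun x hx => (hF x (Ico_subset_Icc_self hx)).hasDerivWithinAt) (by simp)
    (fun x hx => (hB x hx).continuousAt.continuousWithinAt)
    (fun x hx => (hB x (Ico_subset_Icc_self hx)).hasDerivWithinAt)
    (fun x hx => hF' x (Ico_subset_Icc_self hx)) (right_mem_Icc.2 hab)
  linarith

theorem mul_inv_sub_inv_le_sub_of_le_deriv {F F' : ℝ → ℝ} {a b c : ℝ} (ha : 0 < a) (hab : a ≤ b)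
    (hF : ∀ x ∈ Icc a b, HasDerivAt F (F' x) x) (hF' : ∀ x ∈ Icc a b, c * (x ^ 2)⁻¹ ≤ F' x) :
    c * (a⁻¹ - b⁻¹) ≤ F b - F a := by
  have := sub_le_mul_inv_sub_inv_of_deriv_le (F := -F) (c := -c) ha hab (fun x hx => (hF x hx).neg)
    (fun x hx => by simpa using hF' x hx)
  simp only [Pi.neg_apply] at this
  linarith

theorem abs_sub_le_mul_inv_sub_inv_of_abs_deriv_le {F F' : ℝ → ℝ} {a b K : ℝ} (ha : 0 < a)
    (hab : a ≤ b) (hF : ∀ x ∈ Icc a b, HasDerivAt F (F' x) x)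
    (hF' : ∀ x ∈ Icc a b, |F' x| ≤ K * (x ^ 2)⁻¹) :
    |F b - F a| ≤ K * (a⁻¹ - b⁻¹) := by
  have upper := sub_le_mul_inv_sub_inv_of_deriv_le ha hab hF
    fun x hx => (le_abs_self _).trans (hF' x hx)
  have lower := mul_inv_sub_inv_le_sub_of_le_deriv (c := -K) ha hab hF
    fun x hx => by linarith [neg_abs_le (F' x), hF' x hx]
  exact abs_le.2 ⟨by linarith, upper⟩

theorem exists_tendsto_atTop_of_abs_deriv_le_mul_inv_sq {F F' : ℝ → ℝ} {a K : ℝ} (ha : 0 < a)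
    (hF : ∀ x ≥ a, HasDerivAt F (F' x) x) (hF' : ∀ x ≥ a, |F' x| ≤ K * (x ^ 2)⁻¹) :
    ∃ L, Tendsto F atTop (𝓝 L) := by
  -- `F - K x⁻¹` is monotone and bounded above on `[a, ∞)`; precomposing with `max · a` makes it
  -- monotone on all of `ℝ`.
  set G : ℝ → ℝ := fun x => F (max x a) - K * (max x a)⁻¹
  have hG_mono : Monotone G := fun x y hxy => by
    have := mul_inv_sub_inv_le_sub_of_le_deriv (F := F) (c := -K) (ha.trans_le (le_max_right x a))
      (max_le_max_right a hxy) (fun t ht => hF t ((le_max_right x a).trans ht.1))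
      fun t ht => by linarith [neg_abs_le (F' t), hF' t ((le_max_right x a).trans ht.1)]
    simp only [G]
    linarith
  have hG_bdd : BddAbove (range G) := by
    refine ⟨F a + K * a⁻¹, forall_mem_range.2 fun x => ?_⟩
    have hK : 0 ≤ K * (max x a)⁻¹ := by
      have hK0 : 0 ≤ K := nonneg_of_mul_nonneg_left ((abs_nonneg _).trans (hF' a le_rfl))
        (by positivity)
      exact mul_nonneg hK0 (inv_nonneg.2 (ha.le.trans (le_max_right x a)))
    have := (abs_le.1 (abs_sub_le_mul_inv_sub_inv_of_abs_deriv_le ha (le_max_right x a)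
      (fun t ht => hF t ht.1) fun t ht => hF' t ht.1)).2
    simp only [G]
    linarith
  refine ⟨⨆ x, G x, ?_⟩
  have hinv : Tendsto (fun x : ℝ => K * x⁻¹) atTop (𝓝 0) := by
    simpa using tendsto_inv_atTop_zero.const_mul K
  have hlim := (tendsto_atTop_ciSup hG_mono hG_bdd).add hinv
  rw [add_zero] at hlim
  refine hlim.congr' ?_
  filter_upwards [eventually_ge_atTop a] with x hx
  simp [G, max_eq_left hx]

theorem ContinuousOn.exists_hasDerivAt_Ici {f : ℝ → ℝ} {a : ℝ} (hf : ContinuousOn f (Ici a)) :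
    ∃ F : ℝ → ℝ, F a = 0 ∧ ∀ x ≥ a, HasDerivAt F (f x) x := by
  have hf' : Continuous fun x => f (max x a) :=
    hf.comp_continuous (continuous_id.max continuous_const) fun x => le_max_right x a
  refine ⟨fun x => ∫ t in a..x, f (max t a), intervalIntegral.integral_same, fun x hx => ?_⟩
  simpa [max_eq_left hx] using (hf'.integral_hasStrictDerivAt a x).hasDerivAt

theorem exists_integrating_factor {p g z : ℝ → ℝ} {a : ℝ} (hp : ContinuousOn p (Ici a))
    (hz : ∀ x ≥ a, HasDerivAt z (p x * z x + g x) x) :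
    ∃ A : ℝ → ℝ, A a = 0 ∧ (∀ x ≥ a, HasDerivAt A (-p x) x) ∧
      ∀ x ≥ a, HasDerivAt (fun y => exp (A y) * z y) (exp (A x) * g x) x := by
  obtain ⟨A, hA0, hA⟩ := hp.neg.exists_hasDerivAt_Ici
  exact ⟨A, hA0, hA, fun x hx =>
    ((hA x hx).exp.mul (hz x hx)).congr_deriv (by simp only [Pi.neg_apply]; ring)⟩

section LinearODE

variable {p g z : ℝ → ℝ} {δ : ℝ}

theorem exists_integrating_factor_of_abs_le (hp_cont : ContinuousOn p (Ici 1))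
    (hp : ∀ x ≥ 1, |p x| ≤ δ * (x ^ 2)⁻¹) (hz : ∀ x ≥ 1, HasDerivAt z (p x * z x + g x) x) :
    ∃ A : ℝ → ℝ, (∀ x ≥ 1, HasDerivAt A (-p x) x) ∧ (∀ x ≥ 1, |A x| ≤ δ) ∧
      ∀ x ≥ 1, HasDerivAt (fun y => exp (A y) * z y) (exp (A x) * g x) x := by
  obtain ⟨A, hA1, hA, hu⟩ := exists_integrating_factor hp_cont hz
  refine ⟨A, hA, fun x hx => ?_, hu⟩
  have hδ : 0 ≤ δ := by simpa using (abs_nonneg _).trans (hp 1 le_rfl)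
  have := abs_sub_le_mul_inv_sub_inv_of_abs_deriv_le one_pos hx (fun t ht => hA t ht.1)
    fun t ht => (abs_neg (p t)).trans_le (hp t ht.1)
  rw [hA1, sub_zero, inv_one] at this
  nlinarith [inv_nonneg.2 (zero_le_one.trans hx)]

theorem exp_neg_sq_mul_le_of_hasDerivAt_eq_mul_add {c : ℝ}
    (hp_cont : ContinuousOn p (Ici 1)) (hp : ∀ x ≥ 1, |p x| ≤ δ * (x ^ 2)⁻¹) (hc : 0 ≤ c)
    (hg : ∀ x ≥ 1, c * (x ^ 2)⁻¹ ≤ g x) (hz1 : z 1 = 0)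
    (hz : ∀ x ≥ 1, HasDerivAt z (p x * z x + g x) x) {x : ℝ} (hx : 1 ≤ x) :
    exp (-δ) ^ 2 * c * (1 - x⁻¹) ≤ z x := by
  obtain ⟨A, -, hA_abs, hu⟩ := exists_integrating_factor_of_abs_le hp_cont hp hz
  have hx_inv : 0 ≤ 1 - x⁻¹ := sub_nonneg.2 (inv_le_one_of_one_le₀ hx)
  have hu_lower : exp (-δ) * c * (1 - x⁻¹) ≤ exp (A x) * z x := by
    have := mul_inv_sub_inv_le_sub_of_le_deriv (c := exp (-δ) * c) one_pos hx
      (fun t ht => hu t ht.1) fun t ht => by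
        rw [mul_assoc]
        exact mul_le_mul (exp_le_exp.2 (neg_le_of_abs_le (hA_abs t ht.1))) (hg t ht.1)
          (by positivity) (exp_pos _).le
    simpa [hz1] using this
  calc exp (-δ) ^ 2 * c * (1 - x⁻¹) = exp (-δ) * (exp (-δ) * c * (1 - x⁻¹)) := by ring
    _ ≤ exp (-A x) * (exp (A x) * z x) :=
      mul_le_mul (exp_le_exp.2 (neg_le_neg (le_of_abs_le (hA_abs x hx)))) hu_lower
        (by positivity) (exp_pos _).le
    _ = z x := by rw [← mul_assoc, ← exp_add, neg_add_cancel, exp_zero, one_mul]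

theorem exists_tendsto_atTop_of_hasDerivAt_eq_mul_add {C : ℝ}
    (hp_cont : ContinuousOn p (Ici 1)) (hp : ∀ x ≥ 1, |p x| ≤ δ * (x ^ 2)⁻¹)
    (hg : ∀ x ≥ 1, |g x| ≤ C * (x ^ 2)⁻¹) (hz : ∀ x ≥ 1, HasDerivAt z (p x * z x + g x) x) :
    ∃ L, Tendsto z atTop (𝓝 L) := by
  obtain ⟨A, hA, hA_abs, hu⟩ := exists_integrating_factor_of_abs_le hp_cont hp hz
  obtain ⟨LA, hLA⟩ := exists_tendsto_atTop_of_abs_deriv_le_mul_inv_sq one_pos hA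
    fun x hx => (abs_neg (p x)).trans_le (hp x hx)
  obtain ⟨Lu, hLu⟩ := exists_tendsto_atTop_of_abs_deriv_le_mul_inv_sq (K := exp δ * C) one_pos hu
    fun x hx => by
      rw [abs_mul, abs_exp, mul_assoc]
      exact mul_le_mul (exp_le_exp.2 (le_of_abs_le (hA_abs x hx))) (hg x hx) (abs_nonneg _)
        (exp_pos _).le
  refine ⟨exp (-LA) * Lu, (((continuous_exp.tendsto _).comp hLA.neg).mul hLu).congr fun x => ?_⟩
  simp [← mul_assoc, ← exp_add]

end LinearODE

theorem one_half_le_exp_neg_sq_mul_one_sub {δ : ℝ} (hδ : δ ≤ 1 / 5) :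
    1 / 2 ≤ exp (-δ) ^ 2 * (1 - δ) := by
  have := add_one_le_exp (-δ)
  calc (1 : ℝ) / 2 ≤ (1 - δ) ^ 2 * (1 - δ) := by nlinarith
    _ ≤ exp (-δ) ^ 2 * (1 - δ) := by gcongr <;> linarith

theorem penrose_trchi_lower_bound_general (m δ : ℝ) (hm : 0 < m) (hδ : δ ≤ 1/5)
    (a g : ℝ → ℝ)
    (ha_cont : ContinuousOn a (Set.Ici 1))
    (ha : ∀ l ≥ (1:ℝ), |a l| ≤ δ)
    (hg : ∀ l ≥ (1:ℝ), g l ≥ (1 - δ) / (2 * m ^ 2 * l ^ 2))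
    (z : ℝ → ℝ) (hz1 : z 1 = 0)
    (hz : ∀ l ≥ (1:ℝ), HasDerivAt z (-(l ^ 2)⁻¹ * a l * z l + g l) l) :
    (∀ l ≥ (1:ℝ), z l ≥ (l - 1) / (4 * m ^ 2 * l)) ∧
    (∀ l > (1:ℝ), 0 < z l) ∧
    (∀ C : ℝ, (∀ l ≥ (1:ℝ), g l ≤ C * (l ^ 2)⁻¹) →
      ∃ zl : ℝ, Tendsto z atTop (nhds zl)) := by
  have hp_cont : ContinuousOn (fun l => -(l ^ 2)⁻¹ * a l) (Ici 1) :=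
    ((continuousOn_id.pow 2).inv₀ fun l (hl : 1 ≤ l) =>
      pow_ne_zero 2 (zero_lt_one.trans_le hl).ne').neg.mul ha_cont
  have hp : ∀ l ≥ (1:ℝ), |-(l ^ 2)⁻¹ * a l| ≤ δ * (l ^ 2)⁻¹ := fun l hl => by
    rw [abs_mul, abs_neg, abs_inv, abs_pow, abs_of_nonneg (zero_le_one.trans hl), mul_comm]
    exact mul_le_mul_of_nonneg_right (ha l hl) (by positivity)
  have hg' : ∀ l ≥ (1:ℝ), (1 - δ) / (2 * m ^ 2) * (l ^ 2)⁻¹ ≤ g l := fun l hl => by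
    rw [← div_eq_mul_inv, div_div]
    exact hg l hl
  have hc : 0 ≤ (1 - δ) / (2 * m ^ 2) := div_nonneg (by linarith) (by positivity)
  have lower : ∀ l ≥ (1:ℝ), z l ≥ (l - 1) / (4 * m ^ 2 * l) := fun l hl => by
    have hl0 : 0 < l := zero_lt_one.trans_le hl
    have hl_inv : 0 ≤ 1 - l⁻¹ := sub_nonneg.2 (inv_le_one_of_one_le₀ hl)
    calc (l - 1) / (4 * m ^ 2 * l) = 1 / 2 * ((1 - l⁻¹) / (2 * m ^ 2)) := by field_simp; ring
      _ ≤ exp (-δ) ^ 2 * (1 - δ) * ((1 - l⁻¹) / (2 * m ^ 2)) := by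
        gcongr
        exact one_half_le_exp_neg_sq_mul_one_sub hδ
      _ = exp (-δ) ^ 2 * ((1 - δ) / (2 * m ^ 2)) * (1 - l⁻¹) := by ring
      _ ≤ z l := exp_neg_sq_mul_le_of_hasDerivAt_eq_mul_add hp_cont hp hc hg' hz1 hz hl
  refine ⟨lower, fun l hl => ?_, fun C hC => ?_⟩
  · have hl0 : 0 < l := zero_lt_one.trans hl
    exact (div_pos (sub_pos.2 hl) (by positivity)).trans_le (lower l hl.le)
  · refine exists_tendsto_atTop_of_hasDerivAt_eq_mul_add (C := C) hp_cont hp (fun l hl => ?_) hz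
    rw [abs_of_nonneg ((mul_nonneg hc (by positivity)).trans (hg' l hl))]
    exact hC l hl

/-- ODE content of the lower bound (4.32): `z(λ) = λ tr χ` along an incoming
null hypersurface from a MOTS satisfies `z ≥ (λ-1)/(4m²λ)`, is positive for
`λ > 1`, and converges when the forcing is `O(λ⁻²)`. -/
theorem penrose_trchi_lower_bound (m δ : ℝ) (hm : 0 < m) (hδ0 : 0 ≤ δ) (hδ : δ ≤ 1/5)
    (a g : ℝ → ℝ)
    (ha_cont : ContinuousOn a (Set.Ici 1)) (hg_cont : ContinuousOn g (Set.Ici 1))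
    (ha : ∀ l ≥ (1:ℝ), |a l| ≤ δ)
    (hg : ∀ l ≥ (1:ℝ), g l ≥ (1 - δ) / (2 * m ^ 2 * l ^ 2))
    (z : ℝ → ℝ) (hz1 : z 1 = 0)
    (hz : ∀ l ≥ (1:ℝ), HasDerivAt z (-(l ^ 2)⁻¹ * a l * z l + g l) l) :
    (∀ l ≥ (1:ℝ), z l ≥ (l - 1) / (4 * m ^ 2 * l)) ∧
    (∀ l > (1:ℝ), 0 < z l) ∧
    (∀ C : ℝ, (∀ l ≥ (1:ℝ), g l ≤ C * (l ^ 2)⁻¹) →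
      ∃ zl : ℝ, Tendsto z atTop (nhds zl)) :=
  penrose_trchi_lower_bound_general m δ hm hδ a g ha_cont ha hg z hz1 hz
end

section
/- Fix ε > 0. There exists C > 0 depending only on ε such that for every 0 < δ ≤ 1 the following holds. Let μ, f : [1,∞) → ℝ be continuous with |μ(λ) + 2/λ| ≤ δ λ⁻² and |f(λ)| ≤ δ λ^(−3−ε) for all λ ≥ 1, and let y : [1,∞) → ℝ be differentiable with y'(λ) = μ(λ) y(λ) + f(λ) for all λ ≥ 1 and |y(1)| ≤ δ. Then |y(λ)| ≤ C δ λ⁻² for all λ ≥ 1. -/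
/-!
The substitution `z = λ² y` absorbs the leading coefficient `-2/λ`: `z' = a z + λ² f` with
`a = μ + 2/λ`, so `|a| ≤ δ λ⁻²` and `|λ² f| ≤ δ λ^(-1-ε)` are integrable on `[1, ∞)` with
integrals at most `δ` and `δ/ε`. Multiplying by the integrating factor `exp (-∫ a)` gives the
linear Grönwall bound `|z λ| ≤ e^K (|z 1| + e^K ∫ |λ² f|)` with `K = ∫ |a| ≤ 1`, that is,
`|y λ| ≤ e (1 + e/ε) δ λ⁻²`.
-/

open Set Real intervalIntegral MeasureTheory

section LinearODE

variable {a g z : ℝ → ℝ} {t₀ T : ℝ}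

theorem abs_primitive_le_integral_abs (ha : ContinuousOn a (Icc t₀ T)) {x : ℝ}
    (hx : x ∈ Icc t₀ T) : |∫ t in t₀..x, a t| ≤ ∫ t in t₀..T, |a t| :=
  calc |∫ t in t₀..x, a t| ≤ ∫ t in t₀..x, |a t| := abs_integral_le_integral_abs hx.1
    _ ≤ ∫ t in t₀..T, |a t| :=
      integral_mono_interval le_rfl hx.1 hx.2 (ae_of_all _ fun _ ↦ abs_nonneg _)
        (ha.abs.intervalIntegrable_of_Icc (hx.1.trans hx.2))

theorem hasDerivAt_mul_exp_neg_primitive (ha : ContinuousOn a (Icc t₀ T))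
    (hz : ∀ x ∈ Icc t₀ T, HasDerivAt z (a x * z x + g x) x) {x : ℝ} (hx : x ∈ Ioo t₀ T) :
    HasDerivAt (fun s ↦ z s * exp (-∫ t in t₀..s, a t)) (g x * exp (-∫ t in t₀..x, a t)) x := by
  have hA : HasDerivAt (fun s ↦ ∫ t in t₀..s, a t) (a x) x :=
    integral_hasDerivAt_right
      ((ha.mono (Icc_subset_Icc_right hx.2.le)).intervalIntegrable_of_Icc hx.1.le)
      ((ha.mono Ioo_subset_Icc_self).stronglyMeasurableAtFilter isOpen_Ioo x hx)
      (ha.continuousAt (Icc_mem_nhds hx.1 hx.2))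
  exact ((hz x (Ioo_subset_Icc_self hx)).mul hA.neg.exp).congr_deriv
    (by simp only [Pi.neg_apply]; ring)

theorem abs_le_of_hasDerivAt_linear (hT : t₀ ≤ T) (ha : ContinuousOn a (Icc t₀ T))
    (hg : ContinuousOn g (Icc t₀ T)) (hz : ∀ x ∈ Icc t₀ T, HasDerivAt z (a x * z x + g x) x) :
    |z T| ≤ exp (∫ t in t₀..T, |a t|) *
      (|z t₀| + exp (∫ t in t₀..T, |a t|) * ∫ t in t₀..T, |g t|) := by
  set A := fun x ↦ ∫ t in t₀..x, a t
  set K := ∫ t in t₀..T, |a t|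
  have hAK : ∀ x ∈ Icc t₀ T, |A x| ≤ K := fun x hx ↦ abs_primitive_le_integral_abs ha hx
  have hAcont : ContinuousOn A (Icc t₀ T) := by
    simpa only [uIcc_of_le hT] using continuousOn_primitive_interval
      (ha.integrableOn_Icc (μ := volume) |>.mono_set (uIcc_of_le hT).subset)
  have hFTC : ∫ x in t₀..T, g x * exp (-A x) = z T * exp (-A T) - z t₀ * exp (-A t₀) :=
    integral_eq_sub_of_hasDerivAt_of_le hT
      ((HasDerivAt.continuousOn hz).mul hAcont.neg.rexp)
      (fun x hx ↦ hasDerivAt_mul_exp_neg_primitive ha hz hx)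
      ((hg.mul hAcont.neg.rexp).intervalIntegrable_of_Icc hT)
  have hforcing : |∫ x in t₀..T, g x * exp (-A x)| ≤ exp K * ∫ t in t₀..T, |g t| := by
    rw [← Real.norm_eq_abs, ← intervalIntegral.integral_const_mul]
    refine norm_integral_le_of_norm_le hT (ae_of_all _ fun x hx ↦ ?_)
      ((hg.abs.intervalIntegrable_of_Icc hT).const_mul _)
    rw [norm_mul, Real.norm_eq_abs, norm_of_nonneg (exp_pos _).le, mul_comm]
    gcongr
    exact (neg_le_abs _).trans (hAK x (Ioc_subset_Icc_self hx))
  have hA₀ : A t₀ = 0 := integral_same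
  rw [hA₀, neg_zero, exp_zero, mul_one] at hFTC
  calc |z T| = |z T * exp (-A T)| * exp (A T) := by
        rw [abs_mul, abs_of_pos (exp_pos _), mul_assoc, ← exp_add, neg_add_cancel, exp_zero,
          mul_one]
    _ ≤ |z T * exp (-A T)| * exp K := by
        gcongr
        exact le_of_abs_le (hAK T (right_mem_Icc.2 hT))
    _ ≤ (|z t₀| + exp K * ∫ t in t₀..T, |g t|) * exp K := by
        gcongr
        linarith [abs_sub_abs_le_abs_sub (z T * exp (-A T)) (z t₀), hFTC ▸ hforcing]
    _ = _ := mul_comm _ _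

end LinearODE

theorem integral_rpow_le_of_lt_neg_one {r l : ℝ} (hr : r < -1) (hl : 1 ≤ l) :
    ∫ t in (1 : ℝ)..l, t ^ r ≤ -(r + 1)⁻¹ := by
  have h0 : (0 : ℝ) ∉ uIcc 1 l := by rw [uIcc_of_le hl]; exact fun h ↦ by linarith [h.1]
  rw [integral_rpow (Or.inr ⟨hr.ne, h0⟩), one_rpow, div_eq_mul_inv, sub_mul, one_mul]
  have := mul_nonpos_of_nonneg_of_nonpos (rpow_nonneg (zero_le_one.trans hl) (r + 1))
    (inv_nonpos.2 (by linarith : r + 1 ≤ 0))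
  linarith

theorem integral_abs_le_of_abs_le_rpow {φ : ℝ → ℝ} {c r l : ℝ} (hr : r < -1) (hl : 1 ≤ l)
    (hφ : ContinuousOn φ (Icc 1 l)) (hbound : ∀ t ∈ Icc 1 l, |φ t| ≤ c * t ^ r) :
    ∫ t in (1 : ℝ)..l, |φ t| ≤ c * -(r + 1)⁻¹ := by
  have hc : 0 ≤ c := by simpa using (abs_nonneg _).trans (hbound 1 (left_mem_Icc.2 hl))
  calc ∫ t in (1 : ℝ)..l, |φ t| ≤ ∫ t in (1 : ℝ)..l, c * t ^ r :=
        integral_mono_on hl (hφ.abs.intervalIntegrable_of_Icc hl)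
          ((continuousOn_id.rpow_const fun t ht ↦ Or.inl (zero_lt_one.trans_le ht.1).ne')
            |>.intervalIntegrable_of_Icc hl |>.const_mul c) hbound
    _ ≤ c * -(r + 1)⁻¹ := by
        rw [intervalIntegral.integral_const_mul]
        exact mul_le_mul_of_nonneg_left (integral_rpow_le_of_lt_neg_one hr hl) hc

theorem integral_abs_le_of_abs_le_inv_sq {φ : ℝ → ℝ} {c l : ℝ} (hl : 1 ≤ l)
    (hφ : ContinuousOn φ (Icc 1 l)) (hbound : ∀ t ∈ Icc 1 l, |φ t| ≤ c * (t ^ 2)⁻¹) :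
    ∫ t in (1 : ℝ)..l, |φ t| ≤ c :=
  (integral_abs_le_of_abs_le_rpow (r := -2) (by norm_num) hl hφ fun t ht ↦ by
    simpa [rpow_neg (zero_le_one.trans ht.1)] using hbound t ht).trans_eq (by norm_num)

theorem integral_abs_sq_mul_le {f : ℝ → ℝ} {c ε l : ℝ} (hε : 0 < ε) (hl : 1 ≤ l)
    (hf : ContinuousOn f (Icc 1 l)) (hbound : ∀ t ∈ Icc 1 l, |f t| ≤ c * t ^ (-3 - ε)) :
    ∫ t in (1 : ℝ)..l, |t ^ 2 * f t| ≤ c / ε := by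
  refine (integral_abs_le_of_abs_le_rpow (φ := fun t ↦ t ^ 2 * f t) (r := -1 - ε) (by linarith) hl
    ((continuousOn_pow 2).mul hf) fun t ht ↦ ?_).trans_eq
      (by rw [show -1 - ε + 1 = -ε by ring, inv_neg, neg_neg, div_eq_mul_inv])
  have hsplit : t ^ (-1 - ε) = t ^ 2 * t ^ (-3 - ε) := by
    rw [← rpow_two, ← rpow_add (zero_lt_one.trans_le ht.1)]; ring_nf
  rw [abs_mul, abs_of_nonneg (sq_nonneg t), hsplit, mul_left_comm]
  gcongr
  exact hbound t ht

theorem HasDerivAt.sq_mul_of_linear {μ f y : ℝ → ℝ} {x : ℝ} (hx : x ≠ 0)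
    (hy : HasDerivAt y (μ x * y x + f x) x) :
    HasDerivAt (fun t ↦ t ^ 2 * y t) ((μ x + 2 / x) * (x ^ 2 * y x) + x ^ 2 * f x) x :=
  ((hasDerivAt_pow 2 x).mul hy).congr_deriv (by field_simp; ring)

/-- ODE content of the torsion estimate `ζ ∈ O^δ(λ⁻²)` in Lemma 4.6. -/
theorem penrose_torsion_decay (ε : ℝ) (hε : 0 < ε) :
    ∃ C > (0:ℝ), ∀ δ : ℝ, 0 < δ → δ ≤ 1 →
    ∀ μ f y : ℝ → ℝ,
      ContinuousOn μ (Set.Ici 1) → ContinuousOn f (Set.Ici 1) →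
      (∀ l ≥ (1:ℝ), |μ l + 2 / l| ≤ δ * (l ^ 2)⁻¹) →
      (∀ l ≥ (1:ℝ), |f l| ≤ δ * l ^ (-3 - ε)) →
      (∀ l ≥ (1:ℝ), HasDerivAt y (μ l * y l + f l) l) →
      |y 1| ≤ δ →
      ∀ l ≥ (1:ℝ), |y l| ≤ C * δ * (l ^ 2)⁻¹ := by
  refine ⟨exp 1 * (1 + exp 1 / ε), by positivity, ?_⟩
  intro δ _ hδ1 μ f y hμc hfc hμ hf hy hy1 l hl
  have ha : ContinuousOn (fun t ↦ μ t + 2 / t) (Icc 1 l) :=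
    (hμc.mono Icc_subset_Ici_self).add
      (continuousOn_const.div continuousOn_id fun t ht ↦ (zero_lt_one.trans_le ht.1).ne')
  have hf₁ : ContinuousOn f (Icc 1 l) := hfc.mono Icc_subset_Ici_self
  have hK := (integral_abs_le_of_abs_le_inv_sq hl ha fun t ht ↦ hμ t ht.1).trans hδ1
  have hG := integral_abs_sq_mul_le hε hl hf₁ fun t ht ↦ hf t ht.1
  have hG₀ : 0 ≤ ∫ t in (1 : ℝ)..l, |t ^ 2 * f t| := integral_nonneg hl fun _ _ ↦ abs_nonneg _
  have hz : |l ^ 2 * y l| ≤ exp 1 * (1 + exp 1 / ε) * δ :=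
    calc |l ^ 2 * y l| ≤ exp (∫ t in (1 : ℝ)..l, |μ t + 2 / t|) * (|1 ^ 2 * y 1|
          + exp (∫ t in (1 : ℝ)..l, |μ t + 2 / t|) * ∫ t in (1 : ℝ)..l, |t ^ 2 * f t|) :=
          abs_le_of_hasDerivAt_linear hl ha ((continuousOn_pow 2).mul hf₁)
            fun x hx ↦ (hy x hx.1).sq_mul_of_linear (zero_lt_one.trans_le hx.1).ne'
      _ ≤ exp 1 * (δ + exp 1 * (δ / ε)) := by gcongr; simpa using hy1
      _ = exp 1 * (1 + exp 1 / ε) * δ := by ring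
  rw [abs_mul, abs_of_nonneg (sq_nonneg l)] at hz
  rw [← div_eq_mul_inv, le_div_iff₀ (by positivity), mul_comm]
  exact hz
end

section
/- Let 0 < c ≤ C be real numbers and let T : [1,∞) → ℝ be locally Lipschitz with c/λ ≤ T(λ) ≤ C/λ for all λ ≥ 1. Then there exists a unique differentiable function w : [1,∞) → [1,∞) with w(1) = 1 satisfying w'(s) = 2/( s · T(w(s)) ) for all s ≥ 1. Moreover w is strictly increasing, satisfies s^(2/C) ≤ w(s) ≤ s^(2/c) for all s ≥ 1, and w(s) → ∞ as s → ∞. -/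
open Filter

/-- Construction of the luminosity parameter (Section 4.3): global existence,
uniqueness, monotonicity, two-sided power bounds and divergence of the
reparametrization `w` solving `w'(s) = 2/(s T(w(s)))`, `w(1) = 1`. -/
theorem penrose_luminosity_parameter (c C : ℝ) (hc : 0 < c) (hcC : c ≤ C)
    (T : ℝ → ℝ)
    (hlip : ∀ x ∈ Set.Ici (1:ℝ), ∃ K : NNReal, ∃ t ∈ nhdsWithin x (Set.Ici 1),
      LipschitzOnWith K T t)
    (hT : ∀ l ≥ (1:ℝ), c / l ≤ T l ∧ T l ≤ C / l) :
    ∃ w : ℝ → ℝ,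
      (w 1 = 1 ∧ (∀ s ≥ (1:ℝ), 1 ≤ w s) ∧
        (∀ s ≥ (1:ℝ), HasDerivAt w (2 / (s * T (w s))) s)) ∧
      StrictMonoOn w (Set.Ici 1) ∧
      (∀ s ≥ (1:ℝ), s ^ (2 / C) ≤ w s ∧ w s ≤ s ^ (2 / c)) ∧
      Tendsto w atTop atTop ∧
      (∀ w' : ℝ → ℝ, w' 1 = 1 → (∀ s ≥ (1:ℝ), 1 ≤ w' s) →
        (∀ s ≥ (1:ℝ), HasDerivAt w' (2 / (s * T (w' s))) s) →
        ∀ s ≥ (1:ℝ), w' s = w s) := by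
  have hC : 0 < C := lt_of_lt_of_le hc hcC
  -- positivity of T on [1, ∞)
  have hTpos : ∀ l : ℝ, 1 ≤ l → 0 < T l := by
    intro l hl
    have h0 : (0:ℝ) < l := lt_of_lt_of_le one_pos hl
    exact lt_of_lt_of_le (div_pos hc h0) (hT l hl).1
  -- continuity of T within [1, ∞)
  have hTc : ∀ x ∈ Set.Ici (1:ℝ), ContinuousWithinAt T (Set.Ici 1) x := by
    intro x hx
    obtain ⟨K, t, ht, hK⟩ := hlip x hx
    have hxt : x ∈ t := mem_of_mem_nhdsWithin hx ht
    exact (hK.continuousOn x hxt).mono_of_mem_nhdsWithin ht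
  -- extended coefficient
  set Ttil : ℝ → ℝ := fun x => T (max x 1) with hTtil_def
  have hTtilpos : ∀ x, 0 < Ttil x := fun x => hTpos _ (le_max_right x 1)
  have hTtil_eq : ∀ l : ℝ, 1 ≤ l → Ttil l = T l := by
    intro l hl; simp [hTtil_def, max_eq_left hl]
  have contTtil : Continuous Ttil := by
    rw [continuous_iff_continuousAt]
    intro x
    have h1 : Tendsto (fun y : ℝ => max y 1) (nhds x) (nhdsWithin (max x 1) (Set.Ici 1)) :=
      tendsto_nhdsWithin_of_tendsto_nhds_of_eventually_within _
        ((continuous_id.max continuous_const).tendsto x)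
        (Eventually.of_forall fun y => le_max_right y 1)
    exact (hTc (max x 1) (le_max_right x 1)).tendsto.comp h1
  have contf : Continuous (fun u => Ttil u / 2) := contTtil.div_const 2
  -- the antiderivative G
  set G : ℝ → ℝ := fun x => ∫ u in (1:ℝ)..x, Ttil u / 2 with hG_def
  have hG' : ∀ x, HasDerivAt G (Ttil x / 2) x := fun x =>
    (contf.integral_hasStrictDerivAt 1 x).hasDerivAt
  have hGmono : StrictMono G := by
    apply strictMono_of_deriv_pos
    intro x
    rw [(hG' x).deriv]
    exact half_pos (hTtilpos x)
  have contG : Continuous G := continuous_iff_continuousAt.mpr fun x => (hG' x).continuousAt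
  have hG1 : G 1 = 0 := intervalIntegral.integral_same
  -- lower bound of G for x ≥ 1
  have h0notin : ∀ x : ℝ, 1 ≤ x → (0:ℝ) ∉ Set.uIcc 1 x := by
    intro x hx
    rw [Set.uIcc_of_le hx]
    rintro ⟨h0, -⟩; linarith
  have hint1u : ∀ x : ℝ, 1 ≤ x → ∀ k : ℝ,
      IntervalIntegrable (fun u => k * (1/u)) MeasureTheory.volume 1 x := by
    intro x hx k
    apply ContinuousOn.intervalIntegrable
    apply ContinuousOn.mul continuousOn_const
    apply ContinuousOn.div continuousOn_const continuousOn_id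
    intro u hu
    rw [Set.uIcc_of_le hx] at hu
    have : (0:ℝ) < u := lt_of_lt_of_le one_pos hu.1
    exact ne_of_gt this
  have hintval : ∀ x : ℝ, 1 ≤ x → ∀ k : ℝ,
      (∫ u in (1:ℝ)..x, k * (1/u)) = k * Real.log x := by
    intro x hx k
    rw [intervalIntegral.integral_const_mul, integral_one_div (h0notin x hx), div_one]
  have hGlb : ∀ x : ℝ, 1 ≤ x → c/2 * Real.log x ≤ G x := by
    intro x hx
    have hmono := intervalIntegral.integral_mono_on (μ := MeasureTheory.volume) hx
      (hint1u x hx (c/2)) (contf.intervalIntegrable 1 x) ?_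
    · calc c/2 * Real.log x = ∫ u in (1:ℝ)..x, c/2 * (1/u) := (hintval x hx (c/2)).symm
        _ ≤ G x := hmono
    · intro u hu
      have hu1 : (1:ℝ) ≤ u := hu.1
      have hu0 : (0:ℝ) < u := lt_of_lt_of_le one_pos hu1
      have h1 := (hT u hu1).1
      rw [hTtil_eq u hu1]
      calc c/2 * (1/u) = (c/u)/2 := by ring
        _ ≤ T u / 2 := by linarith
  have hGub : ∀ x : ℝ, 1 ≤ x → G x ≤ C/2 * Real.log x := by
    intro x hx
    have hmono := intervalIntegral.integral_mono_on (μ := MeasureTheory.volume) hx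
      (contf.intervalIntegrable 1 x) (hint1u x hx (C/2)) ?_
    · calc G x ≤ ∫ u in (1:ℝ)..x, C/2 * (1/u) := hmono
        _ = C/2 * Real.log x := hintval x hx (C/2)
    · intro u hu
      have hu1 : (1:ℝ) ≤ u := hu.1
      have hu0 : (0:ℝ) < u := lt_of_lt_of_le one_pos hu1
      have h1 := (hT u hu1).2
      calc Ttil u / 2 = T u / 2 := by rw [hTtil_eq u hu1]
        _ ≤ (C/u)/2 := by linarith
        _ = C/2 * (1/u) := by ring
  -- G tends to ∞
  have hGtop : Tendsto G atTop atTop := by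
    apply tendsto_atTop_mono' atTop ((eventually_ge_atTop (1:ℝ)).mono fun x hx => hGlb x hx)
    exact (Real.tendsto_log_atTop).const_mul_atTop (half_pos hc)
  -- G near -∞
  have hGbotloc : ∀ x : ℝ, x ≤ 1 → G x = (x - 1) * (T 1 / 2) := by
    intro x hx
    have hcongr : Set.EqOn (fun u => Ttil u / 2) (fun _ => T 1 / 2) (Set.uIcc 1 x) := by
      intro u hu
      rw [Set.uIcc_of_ge hx] at hu
      simp only [hTtil_def, max_eq_right hu.2]
    rw [hG_def]
    simp only
    rw [intervalIntegral.integral_congr hcongr, intervalIntegral.integral_const, smul_eq_mul]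
  have hGbot : Tendsto G atBot atBot := by
    have hT1 : 0 < T 1 / 2 := half_pos (hTpos 1 le_rfl)
    have base : Tendsto (fun x : ℝ => (x - 1) * (T 1 / 2)) atBot atBot := by
      apply Tendsto.atBot_mul_const hT1
      exact tendsto_atBot_add_const_right atBot (-1 : ℝ) tendsto_id |>.congr
        (fun x => by simp [sub_eq_add_neg])
    exact base.congr' ((eventually_le_atBot (1:ℝ)).mono fun x hx => (hGbotloc x hx).symm)
  have hGsurj : Function.Surjective G := contG.surjective hGtop hGbot
  -- order isomorphism and its inverse
  set e : ℝ ≃o ℝ := StrictMono.orderIsoOfSurjective G hGmono hGsurj with he_def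
  have hcoe : ∀ x, e x = G x := fun x => by
    rw [he_def]; exact congrFun (StrictMono.coe_orderIsoOfSurjective G hGmono hGsurj) x
  have hGe : ∀ y, G (e.symm y) = y := fun y => by
    rw [← hcoe]; exact e.apply_symm_apply y
  have Hcont : Continuous (e.symm : ℝ → ℝ) := OrderIso.continuous e.symm
  have H0 : e.symm 0 = 1 := by
    rw [OrderIso.symm_apply_eq, hcoe, hG1]
  -- the solution
  set w : ℝ → ℝ := fun s => e.symm (Real.log s) with hw_def
  have hw1 : w 1 = 1 := by rw [hw_def]; simp [Real.log_one, H0]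
  have hwge : ∀ s : ℝ, 1 ≤ s → 1 ≤ w s := by
    intro s hs
    have := e.symm.monotone (Real.log_nonneg hs)
    rwa [H0] at this
  have hGw : ∀ s : ℝ, G (w s) = Real.log s := fun s => hGe _
  have hderiv : ∀ s : ℝ, 1 ≤ s → HasDerivAt w (2 / (s * T (w s))) s := by
    intro s hs
    have hs0 : (0:ℝ) < s := lt_of_lt_of_le one_pos hs
    have hl : 1 ≤ w s := hwge s hs
    have hTw : 0 < T (w s) := hTpos _ hl
    have hH : HasDerivAt (fun y => e.symm y) (Ttil (w s) / 2)⁻¹ (Real.log s) :=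
      HasDerivAt.of_local_left_inverse Hcont.continuousAt (hG' (w s))
        (ne_of_gt (half_pos (hTtilpos _))) (Eventually.of_forall hGe)
    have hlog : HasDerivAt Real.log s⁻¹ s := Real.hasDerivAt_log (ne_of_gt hs0)
    have hcomp := hH.comp s hlog
    have hval : (Ttil (w s) / 2)⁻¹ * s⁻¹ = 2 / (s * T (w s)) := by
      rw [hTtil_eq _ hl]
      field_simp
    rw [← hval]
    exact hcomp
  -- strict monotonicity
  have hmonoOn : StrictMonoOn w (Set.Ici 1) := by
    intro s hs t ht hst
    exact e.symm.strictMono (Real.log_lt_log (lt_of_lt_of_le one_pos hs) hst)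
  -- two-sided bounds
  have hbounds : ∀ s : ℝ, 1 ≤ s → s ^ (2/C) ≤ w s ∧ w s ≤ s ^ (2/c) := by
    intro s hs
    have hs0 : (0:ℝ) < s := lt_of_lt_of_le one_pos hs
    have hl : 1 ≤ w s := hwge s hs
    have hl0 : (0:ℝ) < w s := lt_of_lt_of_le one_pos hl
    have h1 : c/2 * Real.log (w s) ≤ Real.log s := by
      rw [← hGw s]; exact hGlb (w s) hl
    have h2 : Real.log s ≤ C/2 * Real.log (w s) := by
      rw [← hGw s]; exact hGub (w s) hl
    constructor
    · have key : Real.log s * (2/C) ≤ Real.log (w s) := by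
        have h2' : 2 * Real.log s ≤ Real.log (w s) * C := by nlinarith [h2]
        calc Real.log s * (2/C) = 2 * Real.log s / C := by ring
          _ ≤ Real.log (w s) := (div_le_iff₀ hC).mpr h2'
      calc s ^ (2/C) = Real.exp (Real.log s * (2/C)) := Real.rpow_def_of_pos hs0 _
        _ ≤ Real.exp (Real.log (w s)) := Real.exp_le_exp.mpr key
        _ = w s := Real.exp_log hl0
    · have key : Real.log (w s) ≤ Real.log s * (2/c) := by
        have h1' : Real.log (w s) * c ≤ 2 * Real.log s := by nlinarith [h1]
        calc Real.log (w s) ≤ 2 * Real.log s / c := (le_div_iff₀ hc).mpr h1'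
          _ = Real.log s * (2/c) := by ring
      calc w s = Real.exp (Real.log (w s)) := (Real.exp_log hl0).symm
        _ ≤ Real.exp (Real.log s * (2/c)) := Real.exp_le_exp.mpr key
        _ = s ^ (2/c) := (Real.rpow_def_of_pos hs0 _).symm
  -- divergence
  have htop : Tendsto w atTop atTop := by
    apply tendsto_atTop_mono' atTop
      ((eventually_ge_atTop (1:ℝ)).mono fun s hs => (hbounds s hs).1)
    exact tendsto_rpow_atTop (by positivity)
  -- uniqueness
  refine ⟨w, ⟨hw1, hwge, hderiv⟩, hmonoOn, hbounds, htop, ?_⟩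
  intro v hv1 hvge hv' s hs
  have hφ : ∀ x : ℝ, 1 ≤ x → HasDerivAt (fun t => G (v t) - Real.log t) 0 x := by
    intro x hx
    have hx0 : (0:ℝ) < x := lt_of_lt_of_le one_pos hx
    have hvx : 1 ≤ v x := hvge x hx
    have hTvx : 0 < T (v x) := hTpos _ hvx
    have h1 := (hG' (v x)).comp x (hv' x hx)
    have h2 := h1.sub (Real.hasDerivAt_log (ne_of_gt hx0))
    have hval : Ttil (v x) / 2 * (2 / (x * T (v x))) - x⁻¹ = 0 := by
      rw [hTtil_eq _ hvx]
      field_simp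
      ring
    rw [← hval]
    exact h2
  have key : ∀ x ∈ Set.Icc (1:ℝ) s, G (v x) - Real.log x = G (v 1) - Real.log 1 := by
    apply constant_of_has_deriv_right_zero
      (f := fun t => G (v t) - Real.log t)
    · intro x hx
      exact ((hφ x hx.1).continuousAt).continuousWithinAt
    · intro x hx
      exact (hφ x hx.1).hasDerivWithinAt
  have hVs := key s (Set.mem_Icc.mpr ⟨hs, le_rfl⟩)
  rw [hv1, hG1, Real.log_one, sub_zero] at hVs
  apply hGmono.injective
  rw [hGw s]
  linarith [hVs]
end

section
/- There exist absolute constants δ₀ ∈ (0,1) and C > 0 such that for all 0 < δ ≤ δ₀ the following holds. Let a : (0,∞) → ℝ be continuous with |a(λ)| ≤ δ for all λ > 0, and let w̃ : [1,∞) → (0,∞) be differentiable with w̃(1) = 1 and w̃'(s) = − a(s·w̃(s))·w̃(s) / ( s·( 2 s·w̃(s) + a(s·w̃(s)) ) ) for all s ≥ 1. Then: (i) |w̃(s) − 1| ≤ C δ (s−1)/s for all s ≥ 1; (ii) w̃(s) converges as s → ∞ to a limit w̃_∞ > 0 with |w̃_∞ − 1| ≤ C δ; (iii) |w̃(s) −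 w̃_∞| ≤ C δ / s for all s ≥ 1; (iv) writing λ(s) := s·w̃(s), for all s > 1 one has |s/λ(s) − 1| ≤ C δ (λ(s) − 1)/λ(s). -/
/-!
Where `w̃ ≥ δ`, the right-hand side of the equation is bounded by `δ / s²`, because its
denominator is at least `s² w̃`. A fencing argument closes this bootstrap: for `δ < 1/2` the
solution cannot leave the region `|w̃ - 1| ≤ 1 - δ`, so `|w̃'| ≤ δ / s²` on all of `[1, ∞)`.
Integrating, `|w̃ t - w̃ s| ≤ δ (1/s - 1/t)`; this gives (i), the Cauchy property (hence the limit
and (ii)) and (iii). Finally (iv) is algebra from (i), since `λ - 1 ≥ (1 - δ) (s - 1)`.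
-/

open Filter Set Topology

theorem abs_sub_le_of_abs_deriv_le_div_sq {f f' : ℝ → ℝ} {K s t : ℝ} (hs : 0 < s) (hst : s ≤ t)
    (hf : ∀ x ∈ Icc s t, HasDerivAt f (f' x) x) (hf' : ∀ x ∈ Icc s t, |f' x| ≤ K / x ^ 2) :
    |f t - f s| ≤ K * (s⁻¹ - t⁻¹) := by
  have hB : ∀ x ∈ Ioi 0, HasDerivAt (fun y => K * (s⁻¹ - y⁻¹)) (K / x ^ 2) x := fun x hx => by
    simpa [div_eq_mul_inv] using ((hasDerivAt_inv (ne_of_gt hx)).const_sub s⁻¹).const_mul K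
  have := image_norm_le_of_norm_deriv_right_le_deriv_boundary'
    (f := fun x => f x - f s) (B := fun y => K * (s⁻¹ - y⁻¹))
    (fun x hx => ((hf x hx).sub_const _).continuousAt.continuousWithinAt)
    (fun x hx => ((hf x (Ico_subset_Icc_self hx)).sub_const _).hasDerivWithinAt)
    (by simp) (fun x hx => (hB x (hs.trans_le hx.1)).continuousAt.continuousWithinAt)
    (fun x hx => (hB x (hs.trans_le hx.1)).hasDerivWithinAt)
    (fun x hx => hf' x (Ico_subset_Icc_self hx)) (right_mem_Icc.2 hst)
  simpa only [Real.norm_eq_abs] using this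

theorem exists_tendsto_of_abs_deriv_le_div_sq {f f' : ℝ → ℝ} {K x₀ : ℝ} (hx₀ : 0 < x₀)
    (hf : ∀ x ≥ x₀, HasDerivAt f (f' x) x) (hf' : ∀ x ≥ x₀, |f' x| ≤ K / x ^ 2) :
    ∃ L, Tendsto f atTop (𝓝 L) ∧ ∀ s ≥ x₀, |f s - L| ≤ K / s := by
  have hK : 0 ≤ K := by
    simpa using (le_div_iff₀ (by positivity)).1 ((abs_nonneg _).trans (hf' x₀ le_rfl))
  have hcauchy : ∀ s t, x₀ ≤ s → s ≤ t → |f t - f s| ≤ K / s := fun s t hs hst =>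
    (abs_sub_le_of_abs_deriv_le_div_sq (hx₀.trans_le hs) hst (fun x hx => hf x (hs.trans hx.1))
      (fun x hx => hf' x (hs.trans hx.1))).trans <| by
        rw [div_eq_mul_inv]
        exact mul_le_mul_of_nonneg_left (sub_le_self _ (inv_nonneg.2 (by linarith))) hK
  obtain ⟨L, hL⟩ := cauchySeq_tendsto_of_complete (u := f) <| Metric.cauchySeq_iff'.2 fun ε hε => by
    obtain ⟨N, hNε, hN⟩ := (((tendsto_const_nhds (x := K)).div_atTop tendsto_id).eventually
      (gt_mem_nhds hε)).and (eventually_ge_atTop x₀) |>.exists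
    exact ⟨N, fun n hn => (Real.dist_eq _ _).trans_lt ((hcauchy N n hN hn).trans_lt hNε)⟩
  refine ⟨L, hL, fun s hs => ?_⟩
  refine le_of_tendsto ((tendsto_const_nhds.sub hL).abs) ?_
  filter_upwards [eventually_ge_atTop s] with t ht
  rw [abs_sub_comm]
  exact hcauchy s t hs ht

theorem abs_deriv_le_div_sq_of_bootstrap {f f' : ℝ → ℝ} {K r x₀ : ℝ} (hx₀ : 0 < x₀) (hr : 0 ≤ r)
    (hKr : K / x₀ < r) (hf : ∀ x ≥ x₀, HasDerivAt f (f' x) x)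
    (hboot : ∀ x ≥ x₀, |f x - f x₀| ≤ r → |f' x| ≤ K / x ^ 2) :
    ∀ x ≥ x₀, |f' x| ≤ K / x ^ 2 := by
  -- barrier `r (1 - x₀ / x)`: it stays below `r`, and its slope `r x₀ / x²` beats `K / x²`
  have hB : ∀ x ∈ Ioi 0, HasDerivAt (fun y => r - r * x₀ * y⁻¹) (r * x₀ / x ^ 2) x := fun x hx => by
    simpa [div_eq_mul_inv] using ((hasDerivAt_inv (ne_of_gt hx)).const_mul (r * x₀)).const_sub r
  have hBr : ∀ x ≥ x₀, r - r * x₀ * x⁻¹ ≤ r := fun x hx =>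
    sub_le_self _ (by have := hx₀.trans_le hx; positivity)
  intro x hx
  refine hboot x hx ?_
  have := image_norm_le_of_norm_deriv_right_lt_deriv_boundary'
    (f := fun y => f y - f x₀) (B := fun y => r - r * x₀ * y⁻¹)
    (fun y hy => ((hf y hy.1).sub_const _).continuousAt.continuousWithinAt)
    (fun y hy => ((hf y hy.1).sub_const _).hasDerivWithinAt)
    (by simp [hx₀.ne']) (fun y hy => (hB y (hx₀.trans_le hy.1)).continuousAt.continuousWithinAt)
    (fun y hy => (hB y (hx₀.trans_le hy.1)).hasDerivWithinAt) ?_ (right_mem_Icc.2 hx)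
  · simp only [Real.norm_eq_abs] at this
    exact this.trans (hBr x hx)
  · intro y hy hfy
    rw [Real.norm_eq_abs] at hfy ⊢
    have hy₀ := hx₀.trans_le hy.1
    calc |f' y| ≤ K / y ^ 2 := hboot y hy.1 (hfy.le.trans (hBr y hy.1))
      _ < r * x₀ / y ^ 2 := by gcongr; rwa [div_lt_iff₀ hx₀] at hKr

theorem abs_luminosity_rhs_le {x w α δ : ℝ} (hx : 1 ≤ x) (hw : δ ≤ w) (hα : |α| ≤ δ) :
    |-(α * w) / (x * (2 * x * w + α))| ≤ δ / x ^ 2 := by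
  rcases (hw.trans' ((abs_nonneg α).trans hα)).eq_or_lt with rfl | hw₀
  · simpa using div_nonneg ((abs_nonneg α).trans hα) (sq_nonneg x)
  have hden : x ^ 2 * w ≤ x * (2 * x * w + α) := by
    nlinarith [neg_abs_le α, mul_le_mul_of_nonneg_left (show x ≤ 2 * x - 1 by linarith) hw₀.le]
  have hden₀ : 0 < x * (2 * x * w + α) := (by positivity : 0 < x ^ 2 * w).trans_le hden
  rw [abs_div, abs_neg, abs_mul, abs_of_pos hw₀, abs_of_pos hden₀,
    div_le_div_iff₀ hden₀ (by positivity)]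
  calc |α| * w * x ^ 2 ≤ δ * (x ^ 2 * w) := by
        nlinarith [mul_le_mul_of_nonneg_right hα (by positivity : 0 ≤ w * x ^ 2)]
    _ ≤ δ * (x * (2 * x * w + α)) := mul_le_mul_of_nonneg_left hden ((abs_nonneg α).trans hα)

theorem abs_div_mul_sub_one_le {s w δ : ℝ} (hs : 1 ≤ s) (hδ₀ : 0 ≤ δ) (hδ : δ ≤ 1 / 2)
    (hw : |w - 1| ≤ δ * (s - 1) / s) : |s / (s * w) - 1| ≤ 2 * δ * (s * w - 1) / (s * w) := by
  have hs₀ : 0 < s := by linarith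
  have hws : |w - 1| * s ≤ δ * (s - 1) := (le_div_iff₀ hs₀).1 hw
  have hw₀ : 0 < w := by nlinarith [neg_abs_le (w - 1)]
  have hsw : s / (s * w) - 1 = (1 - w) / w := by field_simp
  rw [hsw, abs_div, abs_of_pos hw₀, abs_sub_comm, div_le_div_iff₀ hw₀ (by positivity)]
  have hlow : (1 - δ) * (s - 1) ≤ s * w - 1 := by
    nlinarith [mul_le_mul_of_nonneg_left (neg_abs_le (w - 1)) hs₀.le]
  have : δ * (s - 1) ≤ 2 * δ * (s * w - 1) := by
    nlinarith [mul_le_mul_of_nonneg_left hlow hδ₀, mul_nonneg hδ₀ (sub_nonneg.2 hs)]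
  nlinarith [mul_le_mul_of_nonneg_left (hws.trans this) hw₀.le]

/-- Analytic core of Lemma 4.9: estimates and convergence for the ratio
`w̃(s) = w(s)/s` of the luminosity reparametrization to the luminosity
parameter. -/
theorem penrose_luminosity_ratio :
    ∃ δ₀ ∈ Set.Ioo (0:ℝ) 1, ∃ C > (0:ℝ), ∀ δ : ℝ, 0 < δ → δ ≤ δ₀ →
    ∀ a wt : ℝ → ℝ,
      ContinuousOn a (Set.Ioi 0) → (∀ l > (0:ℝ), |a l| ≤ δ) →
      (∀ s ≥ (1:ℝ), 0 < wt s) → wt 1 = 1 →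
      (∀ s ≥ (1:ℝ), HasDerivAt wt
        (-(a (s * wt s) * wt s) / (s * (2 * s * wt s + a (s * wt s)))) s) →
      ((∀ s ≥ (1:ℝ), |wt s - 1| ≤ C * δ * (s - 1) / s) ∧
        (∀ s > (1:ℝ), |s / (s * wt s) - 1| ≤ C * δ * (s * wt s - 1) / (s * wt s)) ∧
        ∃ wInf : ℝ, 0 < wInf ∧ |wInf - 1| ≤ C * δ ∧
          Tendsto wt atTop (nhds wInf) ∧
          (∀ s ≥ (1:ℝ), |wt s - wInf| ≤ C * δ / s)) := by
  refine ⟨1 / 3, ⟨by norm_num, by norm_num⟩, 2, two_pos,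
    fun δ hδ hδ₀ a wt _ ha hwt_pos hwt1 hode => ?_⟩
  have hW : ∀ s ≥ (1:ℝ),
      |-(a (s * wt s) * wt s) / (s * (2 * s * wt s + a (s * wt s)))| ≤ δ / s ^ 2 :=
    abs_deriv_le_div_sq_of_bootstrap (r := 1 - δ) one_pos (by linarith) (by linarith) hode
      fun s hs hclose => abs_luminosity_rhs_le hs
        (by rw [hwt1] at hclose; linarith [neg_abs_le (wt s - 1)])
        (ha _ (mul_pos (by linarith) (hwt_pos s hs)))
  have hi : ∀ s ≥ (1:ℝ), |wt s - 1| ≤ δ * (s - 1) / s := fun s hs => by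
    have := abs_sub_le_of_abs_deriv_le_div_sq one_pos hs (fun x hx => hode x hx.1)
      (fun x hx => hW x hx.1)
    rwa [hwt1, inv_one, ← one_div, one_sub_div (by positivity), ← mul_div_assoc] at this
  obtain ⟨L, hlim, hL⟩ := exists_tendsto_of_abs_deriv_le_div_sq one_pos hode hW
  have hL1 : |L - 1| ≤ δ := by simpa [hwt1, abs_sub_comm] using hL 1 le_rfl
  refine ⟨fun s hs => (hi s hs).trans ?_,
    fun s hs => abs_div_mul_sub_one_le hs.le hδ.le (by linarith) (hi s hs.le),
    L, by linarith [neg_abs_le (L - 1)], hL1.trans (by linarith), hlim,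
    fun s hs => (hL s hs).trans ?_⟩
  · gcongr; linarith
  · gcongr; linarith
end

section
/- Let K, R ≥ 0 and let p, q : [1,∞) → ℝ be continuous with |p(s)| ≤ K s⁻² and |q(s)| ≤ K R s⁻² for all s ≥ 1. Let ẏ : [1,∞) → ℝ be differentiable with ẏ(1) = 0 and ẏ'(s) = p(s)·ẏ(s) + q(s) for all s ≥ 1. Then |ẏ(s)| ≤ e^K · K R · (1 − 1/s) for all s ≥ 1, and ẏ(s) converges to a finite limit as s → ∞. -/
/-!
With `P t = ∫₁ᵗ p`, the integrating factor gives `(exp (-P) y)' = exp (-P) q`, hence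
`y s = exp (P s) ∫₁ˢ exp (-P u) q u du`. The bound `|p| ≤ K s⁻²` makes every increment of `P`
on `[1, ∞)` at most `K`, so `|exp (P s - P u) q u| ≤ e^K K R u⁻²`, which integrates over
`[1, s]` to `e^K K R (1 - 1/s)`. Since `p` and `q` are integrable at infinity, `P` converges and
`exp (-P) q` is integrable, so both factors of the formula for `y s` converge.
-/

open Filter MeasureTheory intervalIntegral Set

theorem ContinuousOn.exists_continuous_eqOn_Ici {α β : Type*} [TopologicalSpace α]
    [LinearOrder α] [OrderClosedTopology α] [TopologicalSpace β] {f : α → β} {a : α}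
    (hf : ContinuousOn f (Ici a)) : ∃ g : α → β, Continuous g ∧ EqOn g f (Ici a) :=
  ⟨fun x => f (max x a), hf.comp_continuous (continuous_id.max continuous_const)
      fun x => le_max_right x a,
    fun x hx => by simp only [max_eq_left (mem_Ici.mp hx)]⟩

theorem integral_inv_sq_of_pos {u s : ℝ} (hu : 0 < u) (hus : u ≤ s) :
    ∫ v in u..s, (v ^ 2)⁻¹ = u⁻¹ - s⁻¹ := by
  have h0 : (0 : ℝ) ∉ uIcc u s := by
    rw [uIcc_of_le hus]; exact fun h => hu.not_ge h.1
  have := integral_zpow (a := u) (b := s) (n := -2) (Or.inr ⟨by norm_num, h0⟩)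
  simp only [zpow_neg, zpow_ofNat] at this
  rw [this]; norm_num; ring

theorem integrableOn_Ioi_inv_sq {a : ℝ} (ha : 0 < a) :
    IntegrableOn (fun v : ℝ => (v ^ 2)⁻¹) (Ioi a) := by
  refine (integrableOn_Ioi_rpow_of_lt (by norm_num : (-2 : ℝ) < -1) ha).congr_fun
    (fun v hv => ?_) measurableSet_Ioi
  simp [Real.rpow_neg (ha.trans hv).le]

theorem abs_intervalIntegral_le_of_abs_le_inv_sq {f : ℝ → ℝ} {u s C : ℝ} (hu : 0 < u)
    (hus : u ≤ s) (hf : IntervalIntegrable f volume u s)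
    (hbound : ∀ v ∈ Icc u s, |f v| ≤ C * (v ^ 2)⁻¹) :
    |∫ v in u..s, f v| ≤ C * (u⁻¹ - s⁻¹) := by
  have hinvsq : IntervalIntegrable (fun v : ℝ => C * (v ^ 2)⁻¹) volume u s := by
    refine (continuousOn_const.mul ((continuousOn_pow 2).inv₀ fun v hv => ?_)).intervalIntegrable
    rw [uIcc_of_le hus] at hv
    exact pow_ne_zero 2 (hu.trans_le hv.1).ne'
  calc |∫ v in u..s, f v| ≤ ∫ v in u..s, |f v| := abs_integral_le_integral_abs hus
    _ ≤ ∫ v in u..s, C * (v ^ 2)⁻¹ := integral_mono_on hus hf.abs hinvsq hbound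
    _ = C * (u⁻¹ - s⁻¹) := by
      rw [intervalIntegral.integral_const_mul, integral_inv_sq_of_pos hu hus]

theorem integrableOn_Ioi_of_abs_le_inv_sq {f : ℝ → ℝ} {a C : ℝ} (ha : 0 < a)
    (hf : Continuous f) (hbound : ∀ v ≥ a, |f v| ≤ C * (v ^ 2)⁻¹) :
    IntegrableOn f (Ioi a) :=
  ((integrableOn_Ioi_inv_sq ha).const_mul C).mono' hf.aestronglyMeasurable.restrict <|
    (ae_restrict_iff' measurableSet_Ioi).2 <| ae_of_all _ fun v hv => hbound v (le_of_lt hv)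

theorem abs_intervalIntegral_le_integral_Ioi_abs {f : ℝ → ℝ} {a u : ℝ}
    (hf : IntegrableOn f (Ioi a)) (hau : a ≤ u) :
    |∫ v in a..u, f v| ≤ ∫ v in Ioi a, |f v| := by
  rw [integral_of_le hau]
  calc |∫ v in Ioc a u, f v| ≤ ∫ v in Ioc a u, |f v| := abs_integral_le_integral_abs
    _ ≤ ∫ v in Ioi a, |f v| :=
      setIntegral_mono_set hf.abs (ae_of_all _ fun _ => abs_nonneg _)
        Ioc_subset_Ioi_self.eventuallyLE

section LinearODE

variable {p q y : ℝ → ℝ} {a : ℝ}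

theorem eq_exp_mul_of_hasDerivAt_mul_add (hp : Continuous p) (hq : Continuous q)
    (hy : ∀ s ≥ a, HasDerivAt y (p s * y s + q s) s) {s : ℝ} (hs : a ≤ s) :
    y s = Real.exp (∫ v in a..s, p v) *
      (y a + ∫ u in a..s, Real.exp (-∫ v in a..u, p v) * q u) := by
  set P : ℝ → ℝ := fun t => ∫ v in a..t, p v
  have hP : ∀ t, HasDerivAt P (p t) t := fun t => (hp.integral_hasStrictDerivAt a t).hasDerivAt
  have hPc : Continuous P := continuous_primitive (fun _ _ => hp.intervalIntegrable _ _) a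
  have hderiv : ∀ u ∈ uIcc a s,
      HasDerivAt (fun t => Real.exp (-P t) * y t) (Real.exp (-P u) * q u) u := by
    intro u hu
    rw [uIcc_of_le hs] at hu
    refine (((hP u).neg.exp).mul (hy u hu.1)).congr_deriv ?_
    rw [Pi.neg_apply]; ring
  have hFTC := integral_eq_sub_of_hasDerivAt hderiv
    ((hPc.neg.rexp.mul hq).intervalIntegrable a s)
  simp only [P, integral_same, neg_zero, Real.exp_zero, one_mul] at hFTC
  rw [hFTC, add_sub_cancel, ← mul_assoc, ← Real.exp_add, add_neg_cancel, Real.exp_zero, one_mul]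

theorem abs_le_of_hasDerivAt_mul_add_of_abs_le_inv_sq {K C : ℝ} (hp : Continuous p)
    (hq : Continuous q) (hy : ∀ s ≥ a, HasDerivAt y (p s * y s + q s) s) (hya : y a = 0)
    (ha : 0 < a) (hK : 0 ≤ K) (hpK : ∀ s ≥ a, |p s| ≤ K * (s ^ 2)⁻¹)
    (hqC : ∀ s ≥ a, |q s| ≤ C * (s ^ 2)⁻¹) {s : ℝ} (hs : a ≤ s) :
    |y s| ≤ Real.exp (K / a) * C * (a⁻¹ - s⁻¹) := by
  set P : ℝ → ℝ := fun t => ∫ v in a..t, p v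
  have hPc : Continuous P := continuous_primitive (fun _ _ => hp.intervalIntegrable _ _) a
  have hgrowth : ∀ u ∈ Icc a s, P s - P u ≤ K / a := by
    intro u hu
    have hincr : |∫ v in u..s, p v| ≤ K * (u⁻¹ - s⁻¹) :=
      abs_intervalIntegral_le_of_abs_le_inv_sq (ha.trans_le hu.1) hu.2
        (hp.intervalIntegrable _ _) fun v hv => hpK v (hu.1.trans hv.1)
    rw [← integral_interval_sub_left (hp.intervalIntegrable _ _) (hp.intervalIntegrable _ _)]
      at hincr
    have hinv : u⁻¹ - s⁻¹ ≤ a⁻¹ :=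
      (sub_le_self _ (inv_nonneg.2 (ha.le.trans hs))).trans (inv_anti₀ ha hu.1)
    calc P s - P u ≤ K * (u⁻¹ - s⁻¹) := (le_abs_self _).trans hincr
      _ ≤ K / a := by rw [div_eq_mul_inv]; exact mul_le_mul_of_nonneg_left hinv hK
  rw [eq_exp_mul_of_hasDerivAt_mul_add hp hq hy hs, hya, zero_add,
    ← intervalIntegral.integral_const_mul]
  refine abs_intervalIntegral_le_of_abs_le_inv_sq ha hs
    ((continuous_const.mul (hPc.neg.rexp.mul hq)).intervalIntegrable _ _) fun u hu => ?_
  calc |Real.exp (P s) * (Real.exp (-P u) * q u)| = Real.exp (P s - P u) * |q u| := by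
        rw [abs_mul, abs_mul, Real.abs_exp, Real.abs_exp, ← mul_assoc, ← Real.exp_add,
          sub_eq_add_neg]
    _ ≤ Real.exp (K / a) * (C * (u ^ 2)⁻¹) :=
        mul_le_mul (Real.exp_le_exp.2 (hgrowth u hu)) (hqC u hu.1) (abs_nonneg _)
          (Real.exp_pos _).le
    _ = Real.exp (K / a) * C * (u ^ 2)⁻¹ := (mul_assoc _ _ _).symm

theorem exists_tendsto_of_hasDerivAt_mul_add (hp : Continuous p) (hq : Continuous q)
    (hy : ∀ s ≥ a, HasDerivAt y (p s * y s + q s) s) (hpi : IntegrableOn p (Ioi a))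
    (hqi : IntegrableOn q (Ioi a)) : ∃ L, Tendsto y atTop (nhds L) := by
  set P : ℝ → ℝ := fun t => ∫ v in a..t, p v
  have hPc : Continuous P := continuous_primitive (fun _ _ => hp.intervalIntegrable _ _) a
  have hforcing : IntegrableOn (fun u => Real.exp (-P u) * q u) (Ioi a) :=
    hqi.bdd_mul (c := Real.exp (∫ v in Ioi a, |p v|)) hPc.neg.rexp.aestronglyMeasurable <|
      (ae_restrict_iff' measurableSet_Ioi).2 <| ae_of_all _ fun u hu => by
        rw [Real.norm_eq_abs, Real.abs_exp]
        exact Real.exp_le_exp.2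
          ((neg_le_abs _).trans (abs_intervalIntegral_le_integral_Ioi_abs hpi (le_of_lt hu)))
  have hlim := ((Real.continuous_exp.tendsto _).comp
    (intervalIntegral_tendsto_integral_Ioi a hpi tendsto_id)).mul
    (tendsto_const_nhds (x := y a) |>.add
      (intervalIntegral_tendsto_integral_Ioi a hforcing tendsto_id))
  refine ⟨_, hlim.congr' ?_⟩
  filter_upwards [eventually_ge_atTop a] with s hs
  exact (eq_exp_mul_of_hasDerivAt_mul_add hp hq hy hs).symm

end LinearODE

theorem penrose_luminosity_variation_general (K R : ℝ) (hK : 0 ≤ K)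
    (p q : ℝ → ℝ)
    (hp_cont : ContinuousOn p (Set.Ici 1)) (hq_cont : ContinuousOn q (Set.Ici 1))
    (hp : ∀ s ≥ (1:ℝ), |p s| ≤ K * (s ^ 2)⁻¹)
    (hq : ∀ s ≥ (1:ℝ), |q s| ≤ K * R * (s ^ 2)⁻¹)
    (y : ℝ → ℝ) (hy1 : y 1 = 0)
    (hy : ∀ s ≥ (1:ℝ), HasDerivAt y (p s * y s + q s) s) :
    (∀ s ≥ (1:ℝ), |y s| ≤ Real.exp K * (K * R) * (1 - 1 / s)) ∧
    ∃ L : ℝ, Tendsto y atTop (nhds L) := by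
  obtain ⟨p', hp'c, hp'p⟩ := hp_cont.exists_continuous_eqOn_Ici
  obtain ⟨q', hq'c, hq'q⟩ := hq_cont.exists_continuous_eqOn_Ici
  have hp' : ∀ s ≥ (1:ℝ), |p' s| ≤ K * (s ^ 2)⁻¹ := fun s hs => hp'p hs ▸ hp s hs
  have hq' : ∀ s ≥ (1:ℝ), |q' s| ≤ K * R * (s ^ 2)⁻¹ := fun s hs => hq'q hs ▸ hq s hs
  have hy' : ∀ s ≥ (1:ℝ), HasDerivAt y (p' s * y s + q' s) s := fun s hs => by
    rw [hp'p hs, hq'q hs]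
    exact hy s hs
  refine ⟨fun s hs => ?_, exists_tendsto_of_hasDerivAt_mul_add hp'c hq'c hy'
    (integrableOn_Ioi_of_abs_le_inv_sq one_pos hp'c hp')
    (integrableOn_Ioi_of_abs_le_inv_sq one_pos hq'c hq')⟩
  simpa using
    abs_le_of_hasDerivAt_mul_add_of_abs_le_inv_sq hp'c hq'c hy' hy1 one_pos hK hp' hq' hs

/-- ODE content of Lemma 4.10: the first variation of the luminosity
reparametrization is bounded and converges at infinity. -/
theorem penrose_luminosity_variation (K R : ℝ) (hK : 0 ≤ K) (hR : 0 ≤ R)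
    (p q : ℝ → ℝ)
    (hp_cont : ContinuousOn p (Set.Ici 1)) (hq_cont : ContinuousOn q (Set.Ici 1))
    (hp : ∀ s ≥ (1:ℝ), |p s| ≤ K * (s ^ 2)⁻¹)
    (hq : ∀ s ≥ (1:ℝ), |q s| ≤ K * R * (s ^ 2)⁻¹)
    (y : ℝ → ℝ) (hy1 : y 1 = 0)
    (hy : ∀ s ≥ (1:ℝ), HasDerivAt y (p s * y s + q s) s) :
    (∀ s ≥ (1:ℝ), |y s| ≤ Real.exp K * (K * R) * (1 - 1 / s)) ∧
    ∃ L : ℝ, Tendsto y atTop (nhds L) :=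
  penrose_luminosity_variation_general K R hK p q hp_cont hq_cont hp hq y hy1 hy
end

section
/- There exist absolute constants δ₀ ∈ (0,1) and C > 0 such that for all 0 < δ ≤ δ₀ the following holds. Let a : (0,∞) × ℝ → ℝ be continuously differentiable with |a(λ,x)| ≤ δ, |∂_λ a(λ,x)| ≤ δ λ⁻², and |∂_x a(λ,x)| ≤ δ for all λ > 0 and x ∈ ℝ, and suppose w̃ : [1,∞) × ℝ → (0,∞) is continuously differentiable with w̃(1,x) = 1 for all x and ∂_s w̃(s,x) = − a(s·w̃(s,x), x)·w̃(s,x) / ( s·( 2 s·w̃(s,x) + a(s·w̃(s,x), x) ) ) for all s ≥ 1 and x ∈ ℝ. Then |∂_x w̃(s,x)| ≤ C δ for all s ≥ 1 and all x ∈ ℝ, and for every x the function s ↦ ∂_x w̃(s,x) converges to a finite limit as s → ∞. -/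
/-!
A continuity (bootstrap) argument keeps `w̃` within `3δ` of `1`, so the denominator of the
luminosity ODE stays comparable to `s²` and its right-hand side is `O(δ s⁻²)`. Writing
`w̃ = 1 + ∫₁ˢ g` and differentiating under the integral sign gives `∂ₓw̃ = ∫₁ˢ K`, where `K`,
computed with the chain rule for `a(s w̃, x)`, is linear in `∂ₓw̃` with coefficient and forcing
`O(δ s⁻²)`. A second bootstrap bounds `∂ₓw̃` by `44δ`; then `K` is integrable on `(1, ∞)`, so
`∂ₓw̃` converges.
-/

open Filter Set Topology MeasureTheory Interval

theorem norm_le_of_bootstrap {E : Type*} [SeminormedAddCommGroup E] {f : ℝ → E}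
    {t₀ b B : ℝ} (hbB : b < B) (hf : ContinuousOn f (Ici t₀)) (h₀ : ‖f t₀‖ ≤ b)
    (step : ∀ t ≥ t₀, (∀ u ∈ Icc t₀ t, ‖f u‖ ≤ B) → ‖f t‖ ≤ b) :
    ∀ t ≥ t₀, ‖f t‖ ≤ b := by
  intro T hT
  have hclosed : IsClosed ({u | ‖f u‖ ≤ b} ∩ Icc t₀ T) := by
    rw [inter_comm]
    exact (hf.mono Icc_subset_Ici_self).norm.preimage_isClosed_of_isClosed isClosed_Icc
      isClosed_Iic
  refine hclosed.Icc_subset_of_forall_mem_nhdsGT_of_Icc_subset h₀ (fun t ht hgood => ?_)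
    ⟨hT, le_rfl⟩
  have hnear : ∀ᶠ u in 𝓝[>] t, ‖f u‖ < B :=
    nhdsWithin_mono _ (Ioi_subset_Ici ht.1) <|
      (hf t ht.1).norm.eventually (gt_mem_nhds ((hgood ⟨ht.1, le_rfl⟩).trans_lt hbB))
  obtain ⟨m, hm, hIoo⟩ := mem_nhdsGT_iff_exists_Ioo_subset.1 hnear
  filter_upwards [Ioo_mem_nhdsGT hm] with y hy
  refine step y (ht.1.trans hy.1.le) fun u hu => ?_
  rcases le_or_gt u t with hut | htu
  · exact (hgood ⟨hu.1, hut⟩).trans hbB.le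
  · exact (hIoo ⟨htu, hu.2.trans_lt hy.2⟩).le

theorem hasDerivAt_neg_div (c : ℝ) {u : ℝ} (hu : u ≠ 0) :
    HasDerivAt (fun u => -(c / u)) (c / u ^ 2) u := by
  simpa [div_eq_mul_inv] using ((hasDerivAt_inv hu).const_mul c).fun_neg

theorem abs_sub_le_of_abs_deriv_le_div_sq_s8 {f f' : ℝ → ℝ} {c t : ℝ} (ht : 1 ≤ t)
    (hf : ∀ u ∈ Icc 1 t, HasDerivAt f (f' u) u) (hf' : ∀ u ∈ Icc 1 t, |f' u| ≤ c / u ^ 2) :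
    |f t - f 1| ≤ c := by
  have hc : 0 ≤ c := by simpa using (abs_nonneg _).trans (hf' 1 ⟨le_rfl, ht⟩)
  have hpos : ∀ u ∈ Icc 1 t, u ≠ 0 := fun u hu => by linarith [hu.1]
  have hB : ∀ u ∈ Icc 1 t, HasDerivAt (fun u => c + -(c / u)) (c / u ^ 2) u :=
    fun u hu => (hasDerivAt_neg_div c (hpos u hu)).const_add c
  have hfB := image_norm_le_of_norm_deriv_right_le_deriv_boundary' (f := fun u => f u - f 1)
    (fun u hu => ((hf u hu).sub_const (f 1)).continuousAt.continuousWithinAt)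
    (fun u hu => ((hf u (Ico_subset_Icc_self hu)).sub_const (f 1)).hasDerivWithinAt)
    (by simp) (fun u hu => (hB u hu).continuousAt.continuousWithinAt)
    (fun u hu => (hB u (Ico_subset_Icc_self hu)).hasDerivWithinAt)
    (fun u hu => hf' u (Ico_subset_Icc_self hu)) ⟨ht, le_rfl⟩
  rw [Real.norm_eq_abs] at hfB
  linarith [show 0 ≤ c / t by positivity]

theorem abs_intervalIntegral_le_of_abs_le_div_sq {f : ℝ → ℝ} {c t : ℝ} (ht : 1 ≤ t)
    (hf : ∀ u ∈ Icc 1 t, |f u| ≤ c / u ^ 2) : |∫ u in (1 : ℝ)..t, f u| ≤ c := by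
  have hc : 0 ≤ c := by simpa using (abs_nonneg _).trans (hf 1 ⟨le_rfl, ht⟩)
  have hpos : ∀ u ∈ [[1, t]], u ≠ 0 := fun u hu => by
    rw [uIcc_of_le ht] at hu
    linarith [hu.1]
  have hint : IntervalIntegrable (fun u => c / u ^ 2) volume 1 t :=
    (continuousOn_const.div (continuousOn_id.pow 2) fun u hu =>
      pow_ne_zero 2 (hpos u hu)).intervalIntegrable
  calc |∫ u in (1 : ℝ)..t, f u| ≤ ∫ u in (1 : ℝ)..t, c / u ^ 2 :=
        intervalIntegral.norm_integral_le_of_norm_le (f := f) ht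
          (ae_of_all _ fun u hu => hf u (Ioc_subset_Icc_self hu)) hint
    _ = c - c / t := by
        rw [intervalIntegral.integral_eq_sub_of_hasDerivAt
          (fun u hu => hasDerivAt_neg_div c (hpos u hu)) hint]
        ring
    _ ≤ c := by linarith [show 0 ≤ c / t by positivity]

theorem integrableOn_Ioi_one_div_sq (c : ℝ) : IntegrableOn (fun u : ℝ => c / u ^ 2) (Ioi 1) := by
  refine IntegrableOn.congr_fun
    ((integrableOn_Ioi_rpow_of_lt (by norm_num : (-2 : ℝ) < -1) one_pos).const_mul c)
    (fun u hu => ?_) measurableSet_Ioi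
  rw [Real.rpow_neg (zero_le_one.trans (le_of_lt hu)), div_eq_mul_inv]
  norm_cast

theorem ContinuousOn.slice_fst {α β E : Type*} [TopologicalSpace α] [TopologicalSpace β]
    [TopologicalSpace E] {g : α × β → E} {S : Set α} (hg : ContinuousOn g (S ×ˢ univ)) (y : β) :
    ContinuousOn (fun x => g (x, y)) S :=
  hg.comp (continuous_id.prodMk continuous_const).continuousOn fun _ hx => ⟨hx, trivial⟩

theorem hasDerivAt_intervalIntegral_of_continuousOn {E : Type*} [NormedAddCommGroup E]
    [NormedSpace ℝ E] {F F' : ℝ → ℝ → E} {a b x₀ : ℝ} (hab : a ≤ b)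
    (hF : ∀ x, ContinuousOn (F · x) (Icc a b))
    (hF' : ContinuousOn (fun p : ℝ × ℝ => F' p.1 p.2) (Icc a b ×ˢ univ))
    (hdiff : ∀ t ∈ Icc a b, ∀ x, HasDerivAt (F t) (F' t x) x) :
    HasDerivAt (fun x => ∫ t in a..b, F t x) (∫ t in a..b, F' t x₀) x₀ := by
  obtain ⟨M, hM⟩ := (isCompact_Icc.prod (isCompact_closedBall x₀ 1)).exists_bound_of_continuousOn
    (hF'.mono (prod_mono subset_rfl (subset_univ _)))
  have hΙ : Ι a b ⊆ Icc a b := by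
    rw [uIoc_of_le hab]
    exact Ioc_subset_Icc_self
  exact (intervalIntegral.hasDerivAt_integral_of_dominated_loc_of_deriv_le (bound := fun _ => M)
    (F := fun x t => F t x) (Metric.closedBall_mem_nhds x₀ one_pos)
    (Eventually.of_forall fun x => ((hF x).mono hΙ).aestronglyMeasurable measurableSet_uIoc)
    ((hF x₀).intervalIntegrable_of_Icc hab)
    (((hF'.slice_fst x₀).mono hΙ).aestronglyMeasurable measurableSet_uIoc)
    (ae_of_all _ fun t ht x hx => hM (t, x) ⟨hΙ ht, hx⟩) intervalIntegrable_const
    (ae_of_all _ fun t ht x _ => hdiff t (hΙ ht) x)).2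

theorem HasDerivAt.comp_of_continuousOn_partials {f f₁ f₂ : ℝ → ℝ → ℝ} {U : Set (ℝ × ℝ)}
    (hU : IsOpen U) (hf₁ : ∀ p ∈ U, HasDerivAt (f · p.2) (f₁ p.1 p.2) p.1)
    (hf₂ : ∀ p ∈ U, HasDerivAt (f p.1 ·) (f₂ p.1 p.2) p.2)
    (hc₁ : ContinuousOn (fun p : ℝ × ℝ => f₁ p.1 p.2) U)
    (hc₂ : ContinuousOn (fun p : ℝ × ℝ => f₂ p.1 p.2) U)
    {l : ℝ → ℝ} {l' x : ℝ} (hl : HasDerivAt l l' x) (hx : (l x, x) ∈ U) :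
    HasDerivAt (fun y => f (l y) y) (f₁ (l x) x * l' + f₂ (l x) x) x := by
  have hU' : U ∈ 𝓝 (l x, x) := hU.mem_nhds hx
  have hspan : Continuous (ContinuousLinearMap.toSpanSingleton ℝ : ℝ → ℝ →L[ℝ] ℝ) :=
    (ContinuousLinearMap.toSpanSingletonCLE : ℝ ≃L[ℝ] (ℝ →L[ℝ] ℝ)).continuous
  have hf := hasStrictFDerivAt_uncurry_coprod (𝕜 := ℝ) (f := f) (u := (l x, x))
    (f₁ := fun p q => ContinuousLinearMap.toSpanSingleton ℝ (f₁ p q))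
    (f₂ := fun p q => ContinuousLinearMap.toSpanSingleton ℝ (f₂ p q))
    (eventually_of_mem hU' fun p hp => (hf₁ p hp).hasFDerivAt)
    (eventually_of_mem hU' fun p hp => (hf₂ p hp).hasFDerivAt)
    (hspan.continuousAt.comp (hc₁.continuousAt hU'))
    (hspan.continuousAt.comp (hc₂.continuousAt hU'))
  refine (hf.hasFDerivAt.comp_hasDerivAt (f := fun y => (l y, y)) x
    (hl.prodMk (hasDerivAt_id x))).congr_deriv ?_
  simp [Function.HasUncurry.uncurry, mul_comm]

/-- The right-hand side of the luminosity ODE (4.59), with `A` standing for `a(s w, x)`. -/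
noncomputable def luminosityRHS (s w A : ℝ) : ℝ := -(A * w) / (s * (2 * s * w + A))

noncomputable def luminosityRHSDeriv (s w A v A' : ℝ) : ℝ :=
  (-(A' * w + A * v) - luminosityRHS s w A * (s * (2 * s * v + A'))) / (s * (2 * s * w + A))

theorem HasDerivAt.luminosityRHS {s x v A' : ℝ} {w A : ℝ → ℝ} (hw : HasDerivAt w v x)
    (hA : HasDerivAt A A' x) (hD : s * (2 * s * w x + A x) ≠ 0) :
    HasDerivAt (fun y => luminosityRHS s (w y) (A y))
      (luminosityRHSDeriv s (w x) (A x) v A') x := by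
  have hN : HasDerivAt (fun y => -(A y * w y)) (-(A' * w x + A x * v)) x := (hA.mul hw).neg
  have hD' : HasDerivAt (fun y => s * (2 * s * w y + A y)) (s * (2 * s * v + A')) x :=
    ((hw.const_mul (2 * s)).add hA).const_mul s
  refine (hN.div hD' hD).congr_deriv ?_
  simp only [luminosityRHSDeriv, _root_.luminosityRHS]
  generalize s * (2 * s * w x + A x) = D at hD ⊢
  field_simp

theorem ContinuousOn.luminosityRHS {X : Type*} [TopologicalSpace X] {S : Set X} {s w A : X → ℝ}
    (hs : ContinuousOn s S) (hw : ContinuousOn w S) (hA : ContinuousOn A S)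
    (hD : ∀ p ∈ S, s p * (2 * s p * w p + A p) ≠ 0) :
    ContinuousOn (fun p => luminosityRHS (s p) (w p) (A p)) S := by
  unfold _root_.luminosityRHS
  fun_prop (disch := assumption)

theorem ContinuousOn.luminosityRHSDeriv {X : Type*} [TopologicalSpace X] {S : Set X}
    {s w A v A' : X → ℝ} (hs : ContinuousOn s S) (hw : ContinuousOn w S) (hA : ContinuousOn A S)
    (hv : ContinuousOn v S) (hA' : ContinuousOn A' S)
    (hD : ∀ p ∈ S, s p * (2 * s p * w p + A p) ≠ 0) :
    ContinuousOn (fun p => luminosityRHSDeriv (s p) (w p) (A p) (v p) (A' p)) S := by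
  have := hs.luminosityRHS hw hA hD
  unfold _root_.luminosityRHSDeriv
  fun_prop (disch := assumption)

theorem sq_div_two_le_luminosity_denom {s w A : ℝ} (hs : 1 ≤ s) (hw : 1 / 2 ≤ w)
    (hA : |A| ≤ 1 / 2) : s ^ 2 / 2 ≤ s * (2 * s * w + A) := by
  nlinarith [neg_abs_le A]

theorem abs_luminosityRHS_le {s w A : ℝ} (hs : 1 ≤ s) (hw : w ∈ Icc (1 / 2 : ℝ) (3 / 2))
    (hA : |A| ≤ 1 / 2) : |luminosityRHS s w A| ≤ 3 * |A| / s ^ 2 := by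
  have hD := sq_div_two_le_luminosity_denom hs hw.1 hA
  have hs2 : 0 < s ^ 2 := by positivity
  rw [luminosityRHS, abs_div, abs_neg, abs_mul, abs_of_pos (by linarith : 0 < s * (2 * s * w + A)),
    abs_of_pos (by linarith [hw.1] : 0 < w), div_le_div_iff₀ (by linarith) hs2]
  nlinarith [mul_le_mul_of_nonneg_left hD (abs_nonneg A),
    mul_le_mul_of_nonneg_left hw.2 (mul_nonneg (abs_nonneg A) hs2.le)]

theorem abs_luminosityRHSDeriv_le {s w A v A' : ℝ} (hs : 1 ≤ s)
    (hw : w ∈ Icc (1 / 2 : ℝ) (3 / 2)) (hA : |A| ≤ 1 / 2) :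
    |luminosityRHSDeriv s w A v A'| ≤ (6 * |A'| + 14 * |A| * |v|) / s ^ 2 := by
  have hD := sq_div_two_le_luminosity_denom hs hw.1 hA
  have hs2 : 0 < s ^ 2 := by positivity
  have hw0 : 0 < w := by linarith [hw.1]
  have hN : |-(A' * w + A * v)| ≤ 3 / 2 * |A'| + |A| * |v| := by
    rw [abs_neg]
    refine (abs_add_le _ _).trans ?_
    rw [abs_mul, abs_mul, abs_of_pos hw0]
    nlinarith [abs_nonneg A', hw.2]
  have hD' : |s * (2 * s * v + A')| ≤ s * (2 * s * |v| + |A'|) := by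
    rw [abs_mul, abs_of_pos (by linarith)]
    refine mul_le_mul_of_nonneg_left ((abs_add_le _ _).trans ?_) (by linarith)
    rw [abs_mul, abs_of_pos (by linarith : 0 < 2 * s)]
  have hgD' : |luminosityRHS s w A * (s * (2 * s * v + A'))| ≤ 6 * |A| * |v| + 3 / 2 * |A'| := by
    rw [abs_mul]
    calc _ ≤ 3 * |A| / s ^ 2 * (s * (2 * s * |v| + |A'|)) :=
          mul_le_mul (abs_luminosityRHS_le hs hw hA) hD' (abs_nonneg _) (by positivity)
      _ = 6 * |A| * |v| + 3 * |A| * |A'| / s := by field_simp; ring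
      _ ≤ 6 * |A| * |v| + 3 / 2 * |A'| := by
          gcongr
          rw [div_le_iff₀ (by linarith)]
          nlinarith [abs_nonneg A']
  rw [luminosityRHSDeriv, abs_div, abs_of_pos (by linarith : 0 < s * (2 * s * w + A)),
    div_le_div_iff₀ (by linarith) hs2]
  nlinarith [abs_sub (-(A' * w + A * v)) (luminosityRHS s w A * (s * (2 * s * v + A'))),
    abs_nonneg (-(A' * w + A * v) - luminosityRHS s w A * (s * (2 * s * v + A')))]

structure IsSmallExpansion (δ : ℝ) (a al ax : ℝ → ℝ → ℝ) : Prop where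
  continuousOn : ContinuousOn (fun p : ℝ × ℝ => a p.1 p.2) (Ioi 0 ×ˢ univ)
  continuousOn_al : ContinuousOn (fun p : ℝ × ℝ => al p.1 p.2) (Ioi 0 ×ˢ univ)
  continuousOn_ax : ContinuousOn (fun p : ℝ × ℝ => ax p.1 p.2) (Ioi 0 ×ˢ univ)
  hasDerivAt_al : ∀ x, ∀ l > (0 : ℝ), HasDerivAt (fun l' => a l' x) (al l x) l
  hasDerivAt_ax : ∀ l > (0 : ℝ), ∀ x, HasDerivAt (fun x' => a l x') (ax l x) x
  abs_le : ∀ l > (0 : ℝ), ∀ x, |a l x| ≤ δ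
  abs_al_le : ∀ l > (0 : ℝ), ∀ x, |al l x| ≤ δ * (l ^ 2)⁻¹
  abs_ax_le : ∀ l > (0 : ℝ), ∀ x, |ax l x| ≤ δ

theorem IsSmallExpansion.nonneg {δ : ℝ} {a al ax : ℝ → ℝ → ℝ} (ha : IsSmallExpansion δ a al ax) :
    0 ≤ δ :=
  (abs_nonneg _).trans (ha.abs_le 1 one_pos 0)

/-- `wt s x = λ / s` compares the affine parameter `λ` with the luminosity `s` along the
generator `x`; `wx` is its angular derivative. -/
structure IsLuminosityRatio (a wt wx : ℝ → ℝ → ℝ) : Prop where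
  continuousOn : ContinuousOn (fun p : ℝ × ℝ => wt p.1 p.2) (Ici 1 ×ˢ univ)
  continuousOn_wx : ContinuousOn (fun p : ℝ × ℝ => wx p.1 p.2) (Ici 1 ×ˢ univ)
  wt_one : ∀ x, wt 1 x = 1
  hasDerivAt_s : ∀ s ≥ (1 : ℝ), ∀ x,
    HasDerivAt (fun s' => wt s' x) (luminosityRHS s (wt s x) (a (s * wt s x) x)) s
  hasDerivAt_x : ∀ s ≥ (1 : ℝ), ∀ x, HasDerivAt (fun x' => wt s x') (wx s x) x

noncomputable def angularDerivRHS (a al ax wt wx : ℝ → ℝ → ℝ) (s x : ℝ) : ℝ :=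
  luminosityRHSDeriv s (wt s x) (a (s * wt s x) x) (wx s x)
    (al (s * wt s x) x * (s * wx s x) + ax (s * wt s x) x)

namespace IsLuminosityRatio

variable {δ : ℝ} {a al ax wt wx : ℝ → ℝ → ℝ} {s : ℝ}

theorem abs_wt_sub_one_le (hw : IsLuminosityRatio a wt wx) (ha : IsSmallExpansion δ a al ax)
    (hδ : δ ≤ 1 / 100) (hs : 1 ≤ s) (x : ℝ) : |wt s x - 1| ≤ 3 * δ := by
  refine norm_le_of_bootstrap (f := fun s => wt s x - 1) (B := 1 / 2) (by linarith)
    (fun u hu => ((hw.hasDerivAt_s u hu x).continuousAt.sub continuousAt_const).continuousWithinAt)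
    (by simp [hw.wt_one, ha.nonneg]) (fun t ht hnear => ?_) s hs
  have hwu : ∀ u ∈ Icc 1 t, wt u x ∈ Icc (1 / 2 : ℝ) (3 / 2) := fun u hu => by
    have := abs_le.1 (hnear u hu)
    constructor <;> linarith [this.1, this.2]
  have := abs_sub_le_of_abs_deriv_le_div_sq_s8 ht (fun u hu => hw.hasDerivAt_s u hu.1 x)
    (c := 3 * δ) fun u hu => ?_
  · simpa [hw.wt_one] using this
  · have hA := ha.abs_le (u * wt u x) (mul_pos (by linarith [hu.1]) (by linarith [(hwu u hu).1])) x
    calc _ ≤ 3 * |a (u * wt u x) x| / u ^ 2 :=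
          abs_luminosityRHS_le hu.1 (hwu u hu) (hA.trans (by linarith))
      _ ≤ 3 * δ / u ^ 2 := by gcongr

theorem wt_mem_Icc (hw : IsLuminosityRatio a wt wx) (ha : IsSmallExpansion δ a al ax)
    (hδ : δ ≤ 1 / 100) (hs : 1 ≤ s) (x : ℝ) : wt s x ∈ Icc (1 / 2 : ℝ) (3 / 2) := by
  have := abs_le.1 (hw.abs_wt_sub_one_le ha hδ hs x)
  constructor <;> linarith [this.1, this.2]

theorem affineParam_pos (hw : IsLuminosityRatio a wt wx) (ha : IsSmallExpansion δ a al ax)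
    (hδ : δ ≤ 1 / 100) (hs : 1 ≤ s) (x : ℝ) : 0 < s * wt s x :=
  mul_pos (by linarith) (by linarith [(hw.wt_mem_Icc ha hδ hs x).1])

theorem continuousOn_comp_affineParam {f : ℝ → ℝ → ℝ} (hw : IsLuminosityRatio a wt wx)
    (ha : IsSmallExpansion δ a al ax) (hδ : δ ≤ 1 / 100)
    (hf : ContinuousOn (fun p : ℝ × ℝ => f p.1 p.2) (Ioi 0 ×ˢ univ)) :
    ContinuousOn (fun p : ℝ × ℝ => f (p.1 * wt p.1 p.2) p.2) (Ici 1 ×ˢ univ) :=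
  hf.comp ((continuous_fst.continuousOn.mul hw.continuousOn).prodMk continuous_snd.continuousOn)
    fun p hp => ⟨hw.affineParam_pos ha hδ hp.1 p.2, trivial⟩

theorem luminosity_denom_pos (hw : IsLuminosityRatio a wt wx) (ha : IsSmallExpansion δ a al ax)
    (hδ : δ ≤ 1 / 100) (hs : 1 ≤ s) (x : ℝ) :
    0 < s * (2 * s * wt s x + a (s * wt s x) x) :=
  lt_of_lt_of_le (by positivity) <| sq_div_two_le_luminosity_denom hs (hw.wt_mem_Icc ha hδ hs x).1
    ((ha.abs_le _ (hw.affineParam_pos ha hδ hs x) x).trans (by linarith))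

theorem continuousOn_luminosityRHS (hw : IsLuminosityRatio a wt wx)
    (ha : IsSmallExpansion δ a al ax) (hδ : δ ≤ 1 / 100) :
    ContinuousOn (fun p : ℝ × ℝ => luminosityRHS p.1 (wt p.1 p.2) (a (p.1 * wt p.1 p.2) p.2))
      (Ici 1 ×ˢ univ) :=
  continuous_fst.continuousOn.luminosityRHS hw.continuousOn
    (hw.continuousOn_comp_affineParam ha hδ ha.continuousOn)
    fun p hp => (hw.luminosity_denom_pos ha hδ hp.1 p.2).ne'

theorem continuousOn_angularDerivRHS (hw : IsLuminosityRatio a wt wx)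
    (ha : IsSmallExpansion δ a al ax) (hδ : δ ≤ 1 / 100) :
    ContinuousOn (fun p : ℝ × ℝ => angularDerivRHS a al ax wt wx p.1 p.2) (Ici 1 ×ˢ univ) :=
  have hs := continuous_fst.continuousOn (s := Ici (1 : ℝ) ×ˢ univ)
  hs.luminosityRHSDeriv hw.continuousOn (hw.continuousOn_comp_affineParam ha hδ ha.continuousOn)
    hw.continuousOn_wx
    (((hw.continuousOn_comp_affineParam ha hδ ha.continuousOn_al).mul
      (hs.mul hw.continuousOn_wx)).add (hw.continuousOn_comp_affineParam ha hδ ha.continuousOn_ax))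
    fun p hp => (hw.luminosity_denom_pos ha hδ hp.1 p.2).ne'

theorem hasDerivAt_luminosityRHS_x (hw : IsLuminosityRatio a wt wx)
    (ha : IsSmallExpansion δ a al ax) (hδ : δ ≤ 1 / 100) (hs : 1 ≤ s) (x : ℝ) :
    HasDerivAt (fun y => luminosityRHS s (wt s y) (a (s * wt s y) y))
      (angularDerivRHS a al ax wt wx s x) x := by
  have hA : HasDerivAt (fun y => a (s * wt s y) y)
      (al (s * wt s x) x * (s * wx s x) + ax (s * wt s x) x) x :=
    HasDerivAt.comp_of_continuousOn_partials (isOpen_Ioi.prod isOpen_univ)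
      (fun p hp => ha.hasDerivAt_al p.2 p.1 hp.1) (fun p hp => ha.hasDerivAt_ax p.1 hp.1 p.2)
      ha.continuousOn_al ha.continuousOn_ax ((hw.hasDerivAt_x s hs x).const_mul s)
      ⟨hw.affineParam_pos ha hδ hs x, trivial⟩
  exact (hw.hasDerivAt_x s hs x).luminosityRHS hA (hw.luminosity_denom_pos ha hδ hs x).ne'

theorem abs_angularDerivRHS_le (hw : IsLuminosityRatio a wt wx)
    (ha : IsSmallExpansion δ a al ax) (hδ : δ ≤ 1 / 100) (hs : 1 ≤ s) (x : ℝ) :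
    |angularDerivRHS a al ax wt wx s x| ≤ δ * (38 * |wx s x| + 6) / s ^ 2 := by
  set l := s * wt s x
  have hl := hw.affineParam_pos ha hδ hs x
  have hA := ha.abs_le l hl x
  have hAl : |al l x| * s ≤ 4 * δ := by
    have : s / 2 ≤ l := by nlinarith [(hw.wt_mem_Icc ha hδ hs x).1]
    have : s ^ 2 / 4 ≤ l ^ 2 := by nlinarith
    calc |al l x| * s ≤ δ * (l ^ 2)⁻¹ * s ^ 2 :=
          mul_le_mul (ha.abs_al_le l hl x) (by nlinarith) (by linarith)
            (mul_nonneg ha.nonneg (by positivity))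
      _ ≤ δ * (s ^ 2 / 4)⁻¹ * s ^ 2 := by
          gcongr
          · exact ha.nonneg
      _ = 4 * δ := by field_simp
  have hA' : |al l x * (s * wx s x) + ax l x| ≤ δ * (4 * |wx s x| + 1) := by
    refine (abs_add_le _ _).trans ?_
    rw [abs_mul, abs_mul, abs_of_pos (by linarith : 0 < s)]
    nlinarith [ha.abs_ax_le l hl x, abs_nonneg (wx s x), abs_nonneg (al l x)]
  calc _ ≤ (6 * |al l x * (s * wx s x) + ax l x| + 14 * |a l x| * |wx s x|) / s ^ 2 :=
        abs_luminosityRHSDeriv_le hs (hw.wt_mem_Icc ha hδ hs x) (hA.trans (by linarith))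
    _ ≤ (6 * (δ * (4 * |wx s x| + 1)) + 14 * δ * |wx s x|) / s ^ 2 := by gcongr
    _ = δ * (38 * |wx s x| + 6) / s ^ 2 := by ring

theorem abs_angularDerivRHS_le_of_abs_wx_le_one (hw : IsLuminosityRatio a wt wx)
    (ha : IsSmallExpansion δ a al ax) (hδ : δ ≤ 1 / 100) (hs : 1 ≤ s) {x : ℝ}
    (hwx : |wx s x| ≤ 1) : |angularDerivRHS a al ax wt wx s x| ≤ 44 * δ / s ^ 2 :=
  calc _ ≤ δ * (38 * |wx s x| + 6) / s ^ 2 := hw.abs_angularDerivRHS_le ha hδ hs x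
    _ ≤ δ * 44 / s ^ 2 := by
        gcongr
        · exact ha.nonneg
        · linarith
    _ = 44 * δ / s ^ 2 := by ring

theorem wt_eq_one_add_integral (hw : IsLuminosityRatio a wt wx) (ha : IsSmallExpansion δ a al ax)
    (hδ : δ ≤ 1 / 100) (hs : 1 ≤ s) (x : ℝ) :
    wt s x = 1 + ∫ u in (1 : ℝ)..s, luminosityRHS u (wt u x) (a (u * wt u x) x) := by
  rw [intervalIntegral.integral_eq_sub_of_hasDerivAt
    (fun u hu => hw.hasDerivAt_s u (by rw [uIcc_of_le hs] at hu; exact hu.1) x)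
    (((hw.continuousOn_luminosityRHS ha hδ).slice_fst x).mono
      Icc_subset_Ici_self |>.intervalIntegrable_of_Icc hs), hw.wt_one]
  ring

theorem wx_eq_integral (hw : IsLuminosityRatio a wt wx) (ha : IsSmallExpansion δ a al ax)
    (hδ : δ ≤ 1 / 100) (hs : 1 ≤ s) (x : ℝ) :
    wx s x = ∫ u in (1 : ℝ)..s, angularDerivRHS a al ax wt wx u x := by
  have hleibniz := hasDerivAt_intervalIntegral_of_continuousOn (x₀ := x) hs
    (F := fun u y => luminosityRHS u (wt u y) (a (u * wt u y) y))
    (fun y => ((hw.continuousOn_luminosityRHS ha hδ).slice_fst y).mono Icc_subset_Ici_self)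
    ((hw.continuousOn_angularDerivRHS ha hδ).mono (prod_mono Icc_subset_Ici_self subset_rfl))
    (fun u hu y => hw.hasDerivAt_luminosityRHS_x ha hδ hu.1 y)
  exact (hw.hasDerivAt_x s hs x).unique ((hleibniz.const_add 1).congr_of_eventuallyEq
    (Eventually.of_forall (hw.wt_eq_one_add_integral ha hδ hs)))

theorem abs_wx_le (hw : IsLuminosityRatio a wt wx) (ha : IsSmallExpansion δ a al ax)
    (hδ : δ ≤ 1 / 100) (hs : 1 ≤ s) (x : ℝ) : |wx s x| ≤ 44 * δ := by
  refine norm_le_of_bootstrap (f := fun s => wx s x) (B := 1) (by linarith)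
    (hw.continuousOn_wx.slice_fst x)
    (by simp [hw.wx_eq_integral ha hδ le_rfl x, ha.nonneg]) (fun t ht hnear => ?_) s hs
  rw [Real.norm_eq_abs, hw.wx_eq_integral ha hδ ht x]
  exact abs_intervalIntegral_le_of_abs_le_div_sq ht fun u hu =>
    hw.abs_angularDerivRHS_le_of_abs_wx_le_one ha hδ hu.1 (hnear u hu)

theorem tendsto_wx (hw : IsLuminosityRatio a wt wx) (ha : IsSmallExpansion δ a al ax)
    (hδ : δ ≤ 1 / 100) (x : ℝ) : ∃ L, Tendsto (fun s => wx s x) atTop (𝓝 L) := by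
  have hK : IntegrableOn (fun u => angularDerivRHS a al ax wt wx u x) (Ioi 1) := by
    refine (integrableOn_Ioi_one_div_sq (44 * δ)).mono'
      ((((hw.continuousOn_angularDerivRHS ha hδ).slice_fst x).mono
        Ioi_subset_Ici_self).aestronglyMeasurable measurableSet_Ioi) ?_
    filter_upwards [ae_restrict_mem measurableSet_Ioi] with u hu
    exact hw.abs_angularDerivRHS_le_of_abs_wx_le_one ha hδ hu.le
      ((hw.abs_wx_le ha hδ hu.le x).trans (by linarith))
  refine ⟨_, (intervalIntegral_tendsto_integral_Ioi 1 hK tendsto_id).congr' ?_⟩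
  filter_upwards [eventually_ge_atTop 1] with s hs
  exact (hw.wx_eq_integral ha hδ hs x).symm

end IsLuminosityRatio

/-- Angular-regularity part of Lemma 4.9: the angular derivative of the ratio
`w̃(s,x)` of the luminosity reparametrization is bounded by `Cδ` and converges
as `s → ∞`. -/
theorem penrose_luminosity_angular_regularity :
    ∃ δ₀ ∈ Set.Ioo (0:ℝ) 1, ∃ C > (0:ℝ), ∀ δ : ℝ, 0 < δ → δ ≤ δ₀ →
    ∀ a al ax : ℝ → ℝ → ℝ,
      ContinuousOn (fun p : ℝ × ℝ => a p.1 p.2) (Set.Ioi 0 ×ˢ Set.univ) →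
      ContinuousOn (fun p : ℝ × ℝ => al p.1 p.2) (Set.Ioi 0 ×ˢ Set.univ) →
      ContinuousOn (fun p : ℝ × ℝ => ax p.1 p.2) (Set.Ioi 0 ×ˢ Set.univ) →
      (∀ x : ℝ, ∀ l > (0:ℝ), HasDerivAt (fun l' => a l' x) (al l x) l) →
      (∀ l > (0:ℝ), ∀ x : ℝ, HasDerivAt (fun x' => a l x') (ax l x) x) →
      (∀ l > (0:ℝ), ∀ x : ℝ,
        |a l x| ≤ δ ∧ |al l x| ≤ δ * (l ^ 2)⁻¹ ∧ |ax l x| ≤ δ) →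
      ∀ wt wx : ℝ → ℝ → ℝ,
        ContinuousOn (fun p : ℝ × ℝ => wt p.1 p.2) (Set.Ici 1 ×ˢ Set.univ) →
        ContinuousOn (fun p : ℝ × ℝ => wx p.1 p.2) (Set.Ici 1 ×ˢ Set.univ) →
        (∀ s ≥ (1:ℝ), ∀ x : ℝ, 0 < wt s x) →
        (∀ x : ℝ, wt 1 x = 1) →
        (∀ s ≥ (1:ℝ), ∀ x : ℝ, HasDerivAt (fun s' => wt s' x)
          (-(a (s * wt s x) x * wt s x) /
            (s * (2 * s * wt s x + a (s * wt s x) x))) s) →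
        (∀ s ≥ (1:ℝ), ∀ x : ℝ, HasDerivAt (fun x' => wt s x') (wx s x) x) →
        ((∀ s ≥ (1:ℝ), ∀ x : ℝ, |wx s x| ≤ C * δ) ∧
          ∀ x : ℝ, ∃ L : ℝ, Tendsto (fun s => wx s x) atTop (nhds L)) := by
  refine ⟨1 / 100, by norm_num, 44, by norm_num,
    fun δ _ hδ a al ax hac halc haxc hal hax hbound wt wx hwtc hwxc _ hwt1 hode hder => ?_⟩
  have ha : IsSmallExpansion δ a al ax := ⟨hac, halc, haxc, hal, hax,
    fun l hl x => (hbound l hl x).1, fun l hl x => (hbound l hl x).2.1,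
    fun l hl x => (hbound l hl x).2.2⟩
  have hw : IsLuminosityRatio a wt wx := ⟨hwtc, hwxc, hwt1, hode, hder⟩
  exact ⟨fun s hs x => hw.abs_wx_le ha hδ hs x, hw.tendsto_wx ha hδ⟩
end

section
/- Let δ ∈ [0, 1/4], ε > 0, and let E be a finite-dimensional real normed space. Let A, B : [1,∞) → (continuous linear endomorphisms of E) and f : [1,∞) → E be continuous with ‖A(λ)‖ ≤ δ λ⁻², ‖B(λ)‖ ≤ δ λ⁻³, and ‖f(λ)‖ ≤ δ λ⁻³ for all λ ≥ 1 (operator norms), and let y : [1,∞) → E be twice differentiable with y(1) = 0, y'(1) = 0, and y''(λ) = A(λ) y'(λ) + B(λ) y(λ) + f(λ) for all λ ≥ 1. Then ‖y'(λ)‖ ≤ δ and ‖y(λ)‖ ≤ δ·(λ − 1) for all λ ≥ 1, and y'(λ) converges to a limit in E as λ → ∞. -/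
/-! The fundamental estimate is a comparison of `y'` with an explicit scalar majorant.
If `M` is the maximum of `‖y'‖` on `[1, Λ]`, then `‖y λ‖ ≤ M (λ - 1)` there, so the equation gives
`‖y'' λ‖ ≤ 2δM λ⁻² + δ λ⁻³`, the derivative of `-2δM λ⁻¹ - (δ/2) λ⁻²`. Hence
`M ≤ 2δM + δ/2`, which forces `M ≤ δ` as soon as `δ ≤ 1/4`. With `M = δ` the same majorant
converges at `∞`, so `y'` is Cauchy at `∞` and converges in the complete space `E`. -/

open Filter Set

theorem exists_tendsto_atTop_of_norm_sub_le_sub {ι E : Type*} [Nonempty ι] [SemilatticeSup ι]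
    [NormedAddCommGroup E] [CompleteSpace E] {u : ι → E} {φ : ι → ℝ} {c : ℝ} {i₀ : ι}
    (hφ : Tendsto φ atTop (nhds c))
    (hu : ∀ i ≥ i₀, ∀ j ≥ i, ‖u j - u i‖ ≤ φ j - φ i) : ∃ L, Tendsto u atTop (nhds L) := by
  refine cauchySeq_tendsto_of_complete (Metric.cauchySeq_iff'.2 fun ε hε => ?_)
  obtain ⟨N, hN⟩ := Metric.cauchySeq_iff.1 hφ.cauchySeq ε hε
  refine ⟨N ⊔ i₀, fun n hn => ?_⟩
  calc dist (u n) (u (N ⊔ i₀)) ≤ φ n - φ (N ⊔ i₀) := by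
        rw [dist_eq_norm]; exact hu _ le_sup_right n hn
    _ ≤ dist (φ n) (φ (N ⊔ i₀)) := le_abs_self _
    _ < ε := hN _ (le_sup_left.trans hn) _ le_sup_left

noncomputable def jacobiMajorant (a b s : ℝ) : ℝ := -(a * s⁻¹) - b / 2 * (s ^ 2)⁻¹

theorem hasDerivAt_jacobiMajorant (a b : ℝ) {s : ℝ} (hs : s ≠ 0) :
    HasDerivAt (jacobiMajorant a b) (a * (s ^ 2)⁻¹ + b * (s ^ 3)⁻¹) s := by
  refine (((hasDerivAt_inv hs).const_mul a).neg.sub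
    (((hasDerivAt_pow 2 s).inv (pow_ne_zero 2 hs)).const_mul (b / 2))).congr_deriv ?_
  field_simp
  ring

theorem jacobiMajorant_nonpos {a b s : ℝ} (ha : 0 ≤ a) (hb : 0 ≤ b) (hs : 0 < s) :
    jacobiMajorant a b s ≤ 0 := by
  unfold jacobiMajorant
  have : 0 ≤ a * s⁻¹ := by positivity
  have : 0 ≤ b / 2 * (s ^ 2)⁻¹ := by positivity
  linarith

theorem jacobiMajorant_one (a b : ℝ) : jacobiMajorant a b 1 = -(a + b / 2) := by
  simp only [jacobiMajorant]; ring

theorem tendsto_jacobiMajorant_atTop (a b : ℝ) :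
    Tendsto (jacobiMajorant a b) atTop (nhds 0) := by
  have h := (tendsto_inv_atTop_zero.const_mul a).neg.sub
    ((tendsto_inv_atTop_zero.comp (tendsto_pow_atTop two_ne_zero)).const_mul (b / 2))
  simp only [mul_zero, neg_zero, sub_zero] at h
  exact h

section

variable {E : Type*} [NormedAddCommGroup E] [NormedSpace ℝ E]

theorem norm_sub_le_sub_of_norm_deriv_le {g g' : ℝ → E} {φ φ' : ℝ → ℝ} {a b : ℝ} (hab : a ≤ b)
    (hg : ∀ x ∈ Icc a b, HasDerivAt g (g' x) x) (hφ : ∀ x ∈ Icc a b, HasDerivAt φ (φ' x) x)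
    (bound : ∀ x ∈ Ico a b, ‖g' x‖ ≤ φ' x) : ‖g b - g a‖ ≤ φ b - φ a := by
  refine image_norm_le_of_norm_deriv_right_le_deriv_boundary' (f := fun x => g x - g a)
    (B := fun x => φ x - φ a) (fun x hx => (hg x hx).continuousAt.continuousWithinAt.sub
      continuousWithinAt_const) (fun x hx => ?_) (by simp)
    (fun x hx => (hφ x hx).continuousAt.continuousWithinAt.sub continuousWithinAt_const)
    (fun x hx => ?_) bound ⟨hab, le_rfl⟩
  · exact ((hg x (Ico_subset_Icc_self hx)).sub_const (g a)).hasDerivWithinAt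
  · exact ((hφ x (Ico_subset_Icc_self hx)).sub_const (φ a)).hasDerivWithinAt

theorem norm_le_mul_sub_of_norm_deriv_le {g g' : ℝ → E} {a b M : ℝ} (ha : g a = 0)
    (hg : ∀ x ∈ Icc a b, HasDerivAt g (g' x) x) (bound : ∀ x ∈ Icc a b, ‖g' x‖ ≤ M) :
    ∀ x ∈ Icc a b, ‖g x‖ ≤ M * (x - a) := by
  intro x hx
  simpa [ha] using norm_image_sub_le_of_norm_deriv_le_segment'
    (fun x hx => (hg x hx).hasDerivWithinAt) (fun x hx => bound x (Ico_subset_Icc_self hx)) x hx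

theorem norm_jacobi_rhs_le {δ M s : ℝ} {P Q : E →L[ℝ] E} {u v w : E} (hs : 1 ≤ s)
    (hP : ‖P‖ ≤ δ * (s ^ 2)⁻¹) (hQ : ‖Q‖ ≤ δ * (s ^ 3)⁻¹) (hw : ‖w‖ ≤ δ * (s ^ 3)⁻¹)
    (hv : ‖v‖ ≤ M) (hu : ‖u‖ ≤ M * (s - 1)) :
    ‖P v + Q u + w‖ ≤ 2 * δ * M * (s ^ 2)⁻¹ + δ * (s ^ 3)⁻¹ := by
  have hs0 : 0 < s := by linarith
  have hM : 0 ≤ M := (norm_nonneg v).trans hv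
  have hδ : 0 ≤ δ := nonneg_of_mul_nonneg_left ((norm_nonneg P).trans hP) (by positivity)
  have hPv : ‖P v‖ ≤ δ * M * (s ^ 2)⁻¹ :=
    calc ‖P v‖ ≤ ‖P‖ * ‖v‖ := P.le_opNorm v
      _ ≤ δ * (s ^ 2)⁻¹ * M := by gcongr
      _ = δ * M * (s ^ 2)⁻¹ := by ring
  -- The growth of `‖u‖` is absorbed by the extra decay of `‖Q‖`: `(s - 1) s⁻³ ≤ s⁻²`.
  have hQu : ‖Q u‖ ≤ δ * M * (s ^ 2)⁻¹ :=
    calc ‖Q u‖ ≤ ‖Q‖ * ‖u‖ := Q.le_opNorm u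
      _ ≤ δ * (s ^ 3)⁻¹ * (M * (s - 1)) := by gcongr
      _ = δ * M * ((s ^ 2)⁻¹ - (s ^ 3)⁻¹) := by field_simp
      _ ≤ δ * M * (s ^ 2)⁻¹ := by gcongr; exact sub_le_self _ (by positivity)
  calc ‖P v + Q u + w‖ ≤ ‖P v‖ + ‖Q u‖ + ‖w‖ := norm_add₃_le
    _ ≤ 2 * δ * M * (s ^ 2)⁻¹ + δ * (s ^ 3)⁻¹ := by linarith

variable {A B : ℝ → E →L[ℝ] E} {f y y' : ℝ → E} {δ : ℝ}

theorem norm_sub_le_jacobiMajorant (hA : ∀ l ≥ (1:ℝ), ‖A l‖ ≤ δ * (l ^ 2)⁻¹)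
    (hB : ∀ l ≥ (1:ℝ), ‖B l‖ ≤ δ * (l ^ 3)⁻¹) (hf : ∀ l ≥ (1:ℝ), ‖f l‖ ≤ δ * (l ^ 3)⁻¹)
    (hy' : ∀ l ≥ (1:ℝ), HasDerivAt y' (A l (y' l) + B l (y l) + f l) l) {M s t : ℝ}
    (hs : 1 ≤ s) (hst : s ≤ t) (hy'_le : ∀ r ∈ Icc s t, ‖y' r‖ ≤ M)
    (hy_le : ∀ r ∈ Icc s t, ‖y r‖ ≤ M * (r - 1)) :
    ‖y' t - y' s‖ ≤ jacobiMajorant (2 * δ * M) δ t - jacobiMajorant (2 * δ * M) δ s := by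
  refine norm_sub_le_sub_of_norm_deriv_le hst (fun r hr => hy' r (hs.trans hr.1))
    (fun r hr => hasDerivAt_jacobiMajorant _ _ (by linarith [hr.1] : 0 < r).ne') fun r hr => ?_
  have h1r : 1 ≤ r := hs.trans hr.1
  exact norm_jacobi_rhs_le h1r (hA r h1r) (hB r h1r) (hf r h1r)
    (hy'_le r (Ico_subset_Icc_self hr)) (hy_le r (Ico_subset_Icc_self hr))

theorem norm_deriv_le_of_jacobi (hδ0 : 0 ≤ δ) (hδ : δ ≤ 1/4)
    (hA : ∀ l ≥ (1:ℝ), ‖A l‖ ≤ δ * (l ^ 2)⁻¹) (hB : ∀ l ≥ (1:ℝ), ‖B l‖ ≤ δ * (l ^ 3)⁻¹)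
    (hf : ∀ l ≥ (1:ℝ), ‖f l‖ ≤ δ * (l ^ 3)⁻¹) (hy0 : y 1 = 0) (hy'0 : y' 1 = 0)
    (hy : ∀ l ≥ (1:ℝ), HasDerivAt y (y' l) l)
    (hy' : ∀ l ≥ (1:ℝ), HasDerivAt y' (A l (y' l) + B l (y l) + f l) l) :
    ∀ l ≥ (1:ℝ), ‖y' l‖ ≤ δ := by
  intro Λ hΛ
  have hy'_cont : ContinuousOn y' (Icc 1 Λ) := fun r hr =>
    (hy' r hr.1).continuousAt.continuousWithinAt
  obtain ⟨c, hc, hmax⟩ := isCompact_Icc.exists_isMaxOn (nonempty_Icc.2 hΛ) hy'_cont.norm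
  set M := ‖y' c‖
  have hy'_le : ∀ r ∈ Icc 1 Λ, ‖y' r‖ ≤ M := fun r hr => hmax hr
  have hy_le := norm_le_mul_sub_of_norm_deriv_le hy0 (fun r hr => hy r hr.1) hy'_le
  have hM : M ≤ 2 * δ * M + δ / 2 :=
    calc M = ‖y' c - y' 1‖ := by rw [hy'0, sub_zero]
      _ ≤ jacobiMajorant (2 * δ * M) δ c - jacobiMajorant (2 * δ * M) δ 1 :=
        norm_sub_le_jacobiMajorant hA hB hf hy' le_rfl hc.1
          (fun r hr => hy'_le r ⟨hr.1, hr.2.trans hc.2⟩)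
          (fun r hr => hy_le r ⟨hr.1, hr.2.trans hc.2⟩)
      _ ≤ 2 * δ * M + δ / 2 := by
        rw [jacobiMajorant_one]
        linarith [jacobiMajorant_nonpos (by positivity : 0 ≤ 2 * δ * M) hδ0
          (by linarith [hc.1] : 0 < c)]
  have hMδ : M ≤ δ := by nlinarith [norm_nonneg (y' c)]
  exact (hy'_le Λ ⟨hΛ, le_rfl⟩).trans hMδ

end

theorem penrose_jacobi_gronwall_general (δ : ℝ) (hδ0 : 0 ≤ δ) (hδ : δ ≤ 1/4)
    (E : Type*) [NormedAddCommGroup E] [NormedSpace ℝ E] [FiniteDimensional ℝ E]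
    (A B : ℝ → E →L[ℝ] E) (f : ℝ → E)
    (hA : ∀ l ≥ (1:ℝ), ‖A l‖ ≤ δ * (l ^ 2)⁻¹)
    (hB : ∀ l ≥ (1:ℝ), ‖B l‖ ≤ δ * (l ^ 3)⁻¹)
    (hf : ∀ l ≥ (1:ℝ), ‖f l‖ ≤ δ * (l ^ 3)⁻¹)
    (y y' : ℝ → E) (hy0 : y 1 = 0) (hy'0 : y' 1 = 0)
    (hy : ∀ l ≥ (1:ℝ), HasDerivAt y (y' l) l)
    (hy' : ∀ l ≥ (1:ℝ), HasDerivAt y' (A l (y' l) + B l (y l) + f l) l) :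
    (∀ l ≥ (1:ℝ), ‖y' l‖ ≤ δ ∧ ‖y l‖ ≤ δ * (l - 1)) ∧
    ∃ L : E, Tendsto y' atTop (nhds L) := by
  have hy'_le := norm_deriv_le_of_jacobi hδ0 hδ hA hB hf hy0 hy'0 hy hy'
  have hy_le : ∀ l ≥ (1:ℝ), ‖y l‖ ≤ δ * (l - 1) := fun l hl =>
    norm_le_mul_sub_of_norm_deriv_le hy0 (fun r hr => hy r hr.1) (fun r hr => hy'_le r hr.1) l
      ⟨hl, le_rfl⟩
  refine ⟨fun l hl => ⟨hy'_le l hl, hy_le l hl⟩, ?_⟩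
  exact exists_tendsto_atTop_of_norm_sub_le_sub (tendsto_jacobiMajorant_atTop (2 * δ * δ) δ)
    fun s hs t hst => norm_sub_le_jacobiMajorant hA hB hf hy' hs hst
      (fun r hr => hy'_le r (hs.trans hr.1)) (fun r hr => hy_le r (hs.trans hr.1))

/-- Grönwall estimate for the second-order linear Jacobi system (5.24) in
Proposition 5.3. -/
theorem penrose_jacobi_gronwall (δ ε : ℝ) (hδ0 : 0 ≤ δ) (hδ : δ ≤ 1/4) (hε : 0 < ε)
    (E : Type*) [NormedAddCommGroup E] [NormedSpace ℝ E] [FiniteDimensional ℝ E]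
    (A B : ℝ → E →L[ℝ] E) (f : ℝ → E)
    (hA_cont : ContinuousOn A (Set.Ici 1)) (hB_cont : ContinuousOn B (Set.Ici 1))
    (hf_cont : ContinuousOn f (Set.Ici 1))
    (hA : ∀ l ≥ (1:ℝ), ‖A l‖ ≤ δ * (l ^ 2)⁻¹)
    (hB : ∀ l ≥ (1:ℝ), ‖B l‖ ≤ δ * (l ^ 3)⁻¹)
    (hf : ∀ l ≥ (1:ℝ), ‖f l‖ ≤ δ * (l ^ 3)⁻¹)
    (y y' : ℝ → E) (hy0 : y 1 = 0) (hy'0 : y' 1 = 0)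
    (hy : ∀ l ≥ (1:ℝ), HasDerivAt y (y' l) l)
    (hy' : ∀ l ≥ (1:ℝ), HasDerivAt y' (A l (y' l) + B l (y l) + f l) l) :
    (∀ l ≥ (1:ℝ), ‖y' l‖ ≤ δ ∧ ‖y l‖ ≤ δ * (l - 1)) ∧
    ∃ L : E, Tendsto y' atTop (nhds L) :=
  penrose_jacobi_gronwall_general δ hδ0 hδ E A B f hA hB hf y y' hy0 hy'0 hy hy'
end
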